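/- arXiv:1304.2483 — 3 statements merged into one kernel-verified Lean document; each statement's English description precedes it below -/
import Mathlib

section
/- Let f = (f_n(k)) (n ≥ 1, 1 ≤ k ≤ 2n−1) be a family of rational numbers satisfying the finite difference system (1.2) together with the initial conditions [tan1]. Then for every n ≥ 1, the row sum equals the tangent number: Σ_{k=1}^{2n−1} f_n(k) = T_{2n−1}. -/
open scoped BigOperators

/-- `σ` is an alternating (down-up) permutation of `{1,…,n}` (written 0-indexed):
`σ(1) > σ(2) < σ(3) > σ(4) < ⋯` in the 1-indexed notation of the paper. -/
def IsAlternating {n : ℕ} (σ : Equiv.Perm (Fin n)) : Prop :=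
  ∀ i : ℕ, ∀ h : i + 1 < n,
    if i % 2 = 0 then (σ ⟨i + 1, h⟩ : ℕ) < (σ ⟨i, by omega⟩ : ℕ)
    else (σ ⟨i, by omega⟩ : ℕ) < (σ ⟨i + 1, h⟩ : ℕ)

/-- The value (in `{1,…,n}`) of the permutation `σ` at the 1-based position `j`,
with the convention that positions outside `{1,…,n}` carry the value `0`. -/
def posVal {n : ℕ} (σ : Equiv.Perm (Fin n)) (j : ℕ) : ℕ :=
  if h : 1 ≤ j ∧ j ≤ n then (σ ⟨j - 1, by omega⟩ : ℕ) + 1 else 0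

/-- `grn σ`: the greater neighbor of the maximum value `n` in `σ`. -/
def grn : {n : ℕ} → Equiv.Perm (Fin n) → ℕ
  | 0, _ => 0
  | (m + 1), σ =>
      max (posVal σ (((σ.symm (Fin.last m) : ℕ) + 1) - 1))
          (posVal σ (((σ.symm (Fin.last m) : ℕ) + 1) + 1))

/-- The set `𝔄_n` of alternating permutations of length `n`. -/
def altA (n : ℕ) : Set (Equiv.Perm (Fin n)) := {σ | IsAlternating σ}

/-- The set `𝔄_{n,k} = {σ ∈ 𝔄_n : grn σ = k}`. -/
def altAk (n k : ℕ) : Set (Equiv.Perm (Fin n)) := {σ | IsAlternating σ ∧ grn σ = k}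

/-- The tangent numbers, defined by `tan u = Σ_{n≥0} T_{2n+1} u^{2n+1}/(2n+1)!`;
`tangentNumber m` is the `m`-th Taylor coefficient of `tan` at `0`, times `m!`. -/
noncomputable def tangentNumber (m : ℕ) : ℝ := iteratedDeriv m Real.tan 0

/-- The secant numbers, defined by `sec u = 1/cos u = Σ_{n≥0} E_{2n} u^{2n}/(2n)!`;
`secantNumber m` is the `m`-th Taylor coefficient of `sec` at `0`, times `m!`. -/
noncomputable def secantNumber (m : ℕ) : ℝ := iteratedDeriv m (fun u => 1 / Real.cos u) 0

/-- The finite difference system (1.2):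
`f_n(k+2) − 2 f_n(k+1) + f_n(k) + 4 f_{n−1}(k) = 0` for `n ≥ 2`, `1 ≤ k ≤ 2n−3`. -/
def SatisfiesFD (f : ℕ → ℕ → ℚ) : Prop :=
  ∀ n, 2 ≤ n → ∀ k, 1 ≤ k → k ≤ 2 * n - 3 →
    f n (k + 2) - 2 * f n (k + 1) + f n k + 4 * f (n - 1) k = 0

/-- Initial conditions [tan1]. -/
def Tan1 (f : ℕ → ℕ → ℚ) : Prop :=
  f 1 1 = 1 ∧ ∀ n, 2 ≤ n →
    f n 1 = 0 ∧ f n 2 = 2 * ∑ k ∈ Finset.Icc 1 (2 * n - 3), f (n - 1) k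

/-- Initial conditions [sec1]. -/
def Sec1 (f : ℕ → ℕ → ℚ) : Prop :=
  f 1 1 = 1 ∧ ∀ n, 2 ≤ n →
    f n 1 = ∑ k ∈ Finset.Icc 1 (2 * n - 3), f (n - 1) k ∧
    f n 2 = 3 * ∑ k ∈ Finset.Icc 1 (2 * n - 3), f (n - 1) k


/-!
Writing `f_{n+1}(j+1)` in the Newton basis `j.choose r`, the system (1.2) becomes
`a_{n+1, r+2} = -4 a_{n, r}` on the coefficients, because the second difference of
`j.choose (r + 2)` is `j.choose r`; the conditions [tan1] give `a_{n+1, 0} = 0` and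
`a_{n+1, 1} = 2 ∑ₖ f_n(k)`. By induction on `n` this pins `f` down as the closed form
`tanSolution`, whose row sum is `T_{2n+1}` by the hockey-stick identity and
the recurrence for tangent numbers obtained by differentiating `sin 2u = tan u · (1 + cos 2u)`
`2n + 1` times at `0` with Leibniz' rule.
-/

open Finset Real

theorem Finset.sum_range_two_mul {M : Type*} [AddCommMonoid M] (n : ℕ) (g : ℕ → M) :
    ∑ i ∈ range (2 * n), g i
      = ∑ m ∈ range n, g (2 * m) + ∑ m ∈ range n, g (2 * m + 1) := by
  induction n with
  | zero => simp
  | succ n ih =>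
    rw [show 2 * (n + 1) = 2 * n + 1 + 1 by ring, sum_range_succ, sum_range_succ, ih,
      sum_range_succ, sum_range_succ]
    abel

theorem Nat.sum_range_choose_eq_choose_succ (N m : ℕ) :
    ∑ j ∈ range N, j.choose m = N.choose (m + 1) := by
  induction N with
  | zero => simp
  | succ N ih => rw [sum_range_succ, ih, Nat.choose_succ_succ', add_comm]

theorem Nat.cast_choose_second_difference {R : Type*} [CommRing R] (j m : ℕ) :
    ((j + 2).choose (m + 2) : R) - 2 * (j + 1).choose (m + 2) + j.choose (m + 2) = j.choose m := by
  rw [Nat.choose_succ_succ (j + 1) (m + 1), Nat.choose_succ_succ j (m + 1),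
    Nat.choose_succ_succ j m]
  push_cast
  ring

theorem Finset.sum_mul_choose_second_difference {ι R : Type*} [CommRing R] (s : Finset ι)
    (a : ι → R) (r : ι → ℕ) (j : ℕ) :
    ∑ i ∈ s, a i * (j + 2).choose (r i + 2) - 2 * ∑ i ∈ s, a i * (j + 1).choose (r i + 2)
      + ∑ i ∈ s, a i * j.choose (r i + 2) = ∑ i ∈ s, a i * j.choose (r i) := by
  rw [mul_sum, ← sum_sub_distrib, ← sum_add_distrib]
  refine sum_congr rfl fun i _ => ?_
  rw [← Nat.cast_choose_second_difference (j := j) (m := r i)]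
  ring

theorem eq_of_second_difference_eq {R : Type*} [CommRing R] {g h : ℕ → R} {N : ℕ}
    (h₀ : g 0 = h 0) (h₁ : g 1 = h 1)
    (hd : ∀ j, j + 2 ≤ N →
      g (j + 2) - 2 * g (j + 1) + g j = h (j + 2) - 2 * h (j + 1) + h j) :
    ∀ j ≤ N, g j = h j := by
  intro j
  induction j using Nat.strong_induction_on with
  | _ j ih =>
    match j with
    | 0 => exact fun _ => h₀
    | 1 => exact fun _ => h₁
    | j + 2 =>
      intro hj
      linear_combination hd j hj + 2 * ih (j + 1) (by omega) (by omega) - ih j (by omega) (by omega)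

theorem Finset.sum_Icc_one_eq_sum_range {M : Type*} [AddCommMonoid M] (g : ℕ → M) (N : ℕ) :
    ∑ k ∈ Icc 1 N, g k = ∑ j ∈ range N, g (j + 1) := by
  rw [← Ico_add_one_right_eq_Icc, sum_Ico_eq_sum_range, Nat.add_sub_cancel]
  simp only [add_comm]

-- Also true where `cos u = 0`, since then `tan u = 0` (division by zero).
theorem Real.sin_two_mul_eq_tan_mul (u : ℝ) : sin (2 * u) = tan u * (1 + cos (2 * u)) := by
  rw [sin_two_mul, cos_two_mul, tan_eq_sin_div_cos]
  rcases eq_or_ne (cos u) 0 with h | h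
  · simp [h]
  · field_simp; ring

theorem iteratedDeriv_sin_two_mul_odd (n : ℕ) :
    iteratedDeriv (2 * n + 1) (fun u => sin (2 * u)) 0 = 2 * (-4) ^ n := by
  rw [iteratedDeriv_comp_const_mul (contDiff_sin.of_le le_top) 2, iteratedDeriv_odd_sin]
  simp only [Pi.mul_apply, Pi.pow_apply, Pi.neg_apply, Pi.one_apply, mul_zero, cos_zero, mul_one]
  rw [pow_succ, pow_mul, neg_pow (4 : ℝ)]
  ring

theorem iteratedDeriv_one_add_cos_two_mul_succ (j : ℕ) (x : ℝ) :
    iteratedDeriv (j + 1) (fun u => 1 + cos (2 * u)) x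
      = 2 ^ (j + 1) * iteratedDeriv (j + 1) cos (2 * x) := by
  rw [iteratedDeriv_const_add j.succ_pos,
    iteratedDeriv_comp_const_mul (contDiff_cos.of_le le_top) 2]

theorem iteratedDeriv_one_add_cos_two_mul_odd (k : ℕ) :
    iteratedDeriv (2 * k + 1) (fun u => 1 + cos (2 * u)) 0 = 0 := by
  simp [iteratedDeriv_one_add_cos_two_mul_succ]

theorem iteratedDeriv_one_add_cos_two_mul_even (k : ℕ) :
    iteratedDeriv (2 * k + 2) (fun u => 1 + cos (2 * u)) 0 = (-4) ^ (k + 1) := by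
  rw [iteratedDeriv_one_add_cos_two_mul_succ, show 2 * k + 1 + 1 = 2 * (k + 1) by ring,
    iteratedDeriv_even_cos]
  simp only [Pi.mul_apply, Pi.pow_apply, Pi.neg_apply, Pi.one_apply, mul_zero, cos_zero, mul_one]
  rw [pow_mul, ← mul_pow]
  norm_num

theorem two_mul_tangentNumber_add_sum (n : ℕ) :
    2 * tangentNumber (2 * n + 1)
      + ∑ m ∈ range n, ((2 * n + 1).choose (2 * m + 1) : ℝ) * tangentNumber (2 * m + 1)
          * (-4) ^ (n - m) = 2 * (-4) ^ n := by
  have hcos : ContDiffAt ℝ (2 * n + 1) (fun u => 1 + cos (2 * u)) 0 := by fun_prop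
  have hmul := iteratedDeriv_fun_mul (contDiffAt_tan.2 (by simp)) hcos
  rw [← funext Real.sin_two_mul_eq_tan_mul, iteratedDeriv_sin_two_mul_odd,
    show 2 * n + 1 + 1 = 2 * (n + 1) by ring, sum_range_two_mul, sum_eq_zero fun m hm => ?_,
    zero_add, sum_range_succ, Nat.sub_self] at hmul
  · rw [hmul, add_comm]
    congr 1
    · refine sum_congr rfl fun m hm => ?_
      obtain ⟨k, hk⟩ : ∃ k, n - m = k + 1 := ⟨n - m - 1, by simp at hm; omega⟩
      rw [show 2 * n + 1 - (2 * m + 1) = 2 * k + 2 by omega,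
        iteratedDeriv_one_add_cos_two_mul_even, hk, tangentNumber]
    · norm_num [tangentNumber, mul_comm]
  · rw [show 2 * n + 1 - 2 * m = 2 * (n - m) + 1 by simp at hm; omega,
      iteratedDeriv_one_add_cos_two_mul_odd, mul_zero]

theorem tangentNumber_two_mul_add_one_eq_sum (n : ℕ) :
    tangentNumber (2 * n + 1) = ∑ i ∈ range n, 2 * (-4) ^ i
        * ((2 * n + 1).choose (2 * i + 2) : ℝ) * tangentNumber (2 * (n - i) - 1) + (-4) ^ n := by
  rw [← sum_range_reflect]
  have hterm : ∀ m ∈ range n,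
      2 * (-4) ^ (n - 1 - m) * ((2 * n + 1).choose (2 * (n - 1 - m) + 2) : ℝ)
        * tangentNumber (2 * (n - (n - 1 - m)) - 1)
      = -(((2 * n + 1).choose (2 * m + 1) : ℝ) * tangentNumber (2 * m + 1)
          * (-4) ^ (n - m) / 2) := by
    intro m hm
    have hm : m < n := mem_range.1 hm
    rw [show 2 * (n - (n - 1 - m)) - 1 = 2 * m + 1 by omega,
      show 2 * (n - 1 - m) + 2 = 2 * n + 1 - (2 * m + 1) by omega, Nat.choose_symm (by omega),
      show n - m = n - 1 - m + 1 by omega]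
    ring
  rw [sum_congr rfl hterm, sum_neg_distrib, ← sum_div]
  linarith [two_mul_tangentNumber_add_sum n]

-- `tanSolution n j` is `f_{n+1}(j+1)`, expanded in the basis `j.choose r`; since `i < n`,
-- the truncated `2 * (n - i) - 1` is the odd number `2 * (n - 1 - i) + 1`.
noncomputable def tanSolution (n j : ℕ) : ℝ :=
  ∑ i ∈ range n, 2 * (-4) ^ i * tangentNumber (2 * (n - i) - 1) * (j.choose (2 * i + 1) : ℝ)
    + (-4) ^ n * (j.choose (2 * n) : ℝ)

theorem tanSolution_succ (n j : ℕ) : tanSolution (n + 1) j = 2 * tangentNumber (2 * n + 1) * j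
    + -4 * ∑ i ∈ range n, 2 * (-4) ^ i * tangentNumber (2 * (n - i) - 1)
        * (j.choose (2 * i + 1 + 2) : ℝ) + -4 * ((-4) ^ n * (j.choose (2 * n + 2) : ℝ)) := by
  have hterm : ∀ i ∈ range n, 2 * (-4) ^ (i + 1) * tangentNumber (2 * (n + 1 - (i + 1)) - 1)
      * (j.choose (2 * (i + 1) + 1) : ℝ)
      = -4 * (2 * (-4) ^ i * tangentNumber (2 * (n - i) - 1)
          * (j.choose (2 * i + 1 + 2) : ℝ)) := by
    intro i _
    rw [show 2 * (n + 1 - (i + 1)) - 1 = 2 * (n - i) - 1 by omega,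
      show 2 * (i + 1) + 1 = 2 * i + 1 + 2 by ring]
    ring
  rw [tanSolution, sum_range_succ', sum_congr rfl hterm, ← mul_sum,
    show 2 * (n + 1 - 0) - 1 = 2 * n + 1 by omega]
  simp only [pow_succ, mul_add, mul_zero, zero_add, Nat.choose_one_right, pow_zero]
  ring

theorem tanSolution_second_difference (n j : ℕ) :
    tanSolution (n + 1) (j + 2) - 2 * tanSolution (n + 1) (j + 1) + tanSolution (n + 1) j
      = -4 * tanSolution n j := by
  rw [tanSolution_succ, tanSolution_succ, tanSolution_succ, tanSolution]
  push_cast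
  linear_combination (-4 : ℝ) * sum_mul_choose_second_difference (range n)
      (fun i => 2 * (-4) ^ i * tangentNumber (2 * (n - i) - 1)) (fun i => 2 * i + 1) j
    + (-4 : ℝ) * (-4) ^ n * Nat.cast_choose_second_difference (R := ℝ) j (2 * n)

theorem tanSolution_zero_zero : tanSolution 0 0 = 1 := by simp [tanSolution]

theorem tanSolution_succ_zero (n : ℕ) : tanSolution (n + 1) 0 = 0 := by simp [tanSolution_succ]

theorem tanSolution_succ_one (n : ℕ) : tanSolution (n + 1) 1 = 2 * tangentNumber (2 * n + 1) := by
  simp [tanSolution_succ, Nat.choose_eq_zero_of_lt]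

theorem sum_range_tanSolution (n : ℕ) :
    ∑ j ∈ range (2 * n + 1), tanSolution n j = tangentNumber (2 * n + 1) := by
  simp only [tanSolution, sum_add_distrib, ← mul_sum]
  rw [sum_comm]
  simp only [← mul_sum, ← Nat.cast_sum, Nat.sum_range_choose_eq_choose_succ, Nat.choose_self,
    tangentNumber_two_mul_add_one_eq_sum]
  push_cast
  rw [mul_one]
  congr 1
  exact sum_congr rfl fun i _ => by ring

theorem cast_sum_eq_tangentNumber_of_eq_tanSolution {f : ℕ → ℕ → ℚ} {n : ℕ}
    (hf : ∀ j ≤ 2 * n, (f (n + 1) (j + 1) : ℝ) = tanSolution n j) :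
    ((∑ k ∈ Icc 1 (2 * n + 1), f (n + 1) k : ℚ) : ℝ) = tangentNumber (2 * n + 1) := by
  rw [Rat.cast_sum, sum_Icc_one_eq_sum_range, ← sum_range_tanSolution]
  exact sum_congr rfl fun j hj => hf j (by simp at hj; omega)

theorem SatisfiesFD.cast_apply_eq_tanSolution {f : ℕ → ℕ → ℚ} (hFD : SatisfiesFD f)
    (hInit : Tan1 f) (n : ℕ) :
    ∀ j ≤ 2 * n, (f (n + 1) (j + 1) : ℝ) = tanSolution n j := by
  induction n with
  | zero =>
    intro j hj
    obtain rfl : j = 0 := by omega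
    simp [hInit.1, tanSolution_zero_zero]
  | succ n ih =>
    obtain ⟨hf₁, hf₂⟩ := hInit.2 (n + 2) (by omega)
    apply eq_of_second_difference_eq
    · simp [hf₁, tanSolution_succ_zero]
    · rw [hf₂, tanSolution_succ_one, show 2 * (n + 2) - 3 = 2 * n + 1 by omega,
        show n + 2 - 1 = n + 1 from rfl, Rat.cast_mul,
        cast_sum_eq_tangentNumber_of_eq_tanSolution ih]
      norm_num
    · intro j hj
      have hrec := congrArg ((↑) : ℚ → ℝ)
        (hFD (n + 2) (by omega) (j + 1) (by omega) (by omega))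
      rw [show n + 2 - 1 = n + 1 from rfl] at hrec
      push_cast at hrec
      rw [tanSolution_second_difference, ← ih j (by omega)]
      linear_combination hrec

/-- any solution of the finite difference system (1.2) with initial
conditions [tan1] has row sums equal to the tangent numbers. -/
theorem stmt0 (f : ℕ → ℕ → ℚ) (hFD : SatisfiesFD f) (hInit : Tan1 f) :
    ∀ n, 1 ≤ n →
      ((∑ k ∈ Finset.Icc 1 (2 * n - 1), f n k : ℚ) : ℝ) = tangentNumber (2 * n - 1) := by
  rintro (_ | n) hn
  · omega
  · rw [show 2 * (n + 1) - 1 = 2 * n + 1 by omega]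
    exact cast_sum_eq_tangentNumber_of_eq_tanSolution (hFD.cast_apply_eq_tanSolution hInit n)
end

section
/- Let f = (f_n(k)) (n ≥ 1, 1 ≤ k ≤ 2n−1) be a family of rational numbers satisfying the finite difference system (1.2) together with the initial conditions [tan1]. Then for all n ≥ 1 and 1 ≤ k ≤ 2n−1, f_n(k) = #𝔄_{2n−1,k−1}. -/
open scoped BigOperators

namespace Stmt5

open Equiv

variable {N : ℕ}

lemma posVal_of_range (σ : Equiv.Perm (Fin N)) {j : ℕ} (h1 : 1 ≤ j) (h2 : j ≤ N) :
    posVal σ j = (σ ⟨j - 1, by omega⟩ : ℕ) + 1 := by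
  unfold posVal; rw [dif_pos ⟨h1, h2⟩]

lemma posVal_of_out (σ : Equiv.Perm (Fin N)) {j : ℕ} (h : ¬(1 ≤ j ∧ j ≤ N)) :
    posVal σ j = 0 := by
  unfold posVal; rw [dif_neg h]

lemma posVal_le (σ : Equiv.Perm (Fin N)) (j : ℕ) : posVal σ j ≤ N := by
  unfold posVal
  split
  · exact Nat.succ_le_of_lt (σ _).isLt
  · omega

lemma posVal_pos (σ : Equiv.Perm (Fin N)) {j : ℕ} (h1 : 1 ≤ j) (h2 : j ≤ N) :
    1 ≤ posVal σ j := by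
  rw [posVal_of_range σ h1 h2]; omega

lemma posVal_pos_iff (σ : Equiv.Perm (Fin N)) {j : ℕ} :
    1 ≤ posVal σ j ↔ (1 ≤ j ∧ j ≤ N) := by
  constructor
  · intro h
    by_contra hc
    rw [posVal_of_out σ hc] at h; omega
  · exact fun ⟨h1, h2⟩ => posVal_pos σ h1 h2

lemma posVal_inj (σ : Equiv.Perm (Fin N)) {i j : ℕ} (hi : 1 ≤ i) (hi' : i ≤ N)
    (hj : 1 ≤ j) (hj' : j ≤ N) (h : posVal σ i = posVal σ j) : i = j := by
  rw [posVal_of_range σ hi hi', posVal_of_range σ hj hj'] at h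
  have := σ.injective (Fin.val_injective (by omega : ((σ ⟨i-1, by omega⟩ : Fin N) : ℕ) = (σ ⟨j-1, by omega⟩ : ℕ)))
  have := congrArg Fin.val this
  simp at this
  omega

lemma posVal_exists (σ : Equiv.Perm (Fin N)) {v : ℕ} (h1 : 1 ≤ v) (h2 : v ≤ N) :
    ∃ j, 1 ≤ j ∧ j ≤ N ∧ posVal σ j = v := by
  refine ⟨(σ.symm ⟨v - 1, by omega⟩ : ℕ) + 1, by omega, by have := (σ.symm ⟨v-1, by omega⟩).isLt; omega, ?_⟩
  rw [posVal_of_range σ (by omega) (by have := (σ.symm ⟨v-1, by omega⟩).isLt; omega)]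
  simp
  omega

/-- `Zig σ`: 1-based alternating condition: odd positions are peaks. -/
def Zig (σ : Equiv.Perm (Fin N)) : Prop :=
  ∀ j, 1 ≤ j → j + 1 ≤ N →
    (j % 2 = 1 → posVal σ (j + 1) < posVal σ j) ∧
    (j % 2 = 0 → posVal σ j < posVal σ (j + 1))

lemma isAlternating_iff_zig (σ : Equiv.Perm (Fin N)) : IsAlternating σ ↔ Zig σ := by
  constructor
  · intro h j hj1 hjN
    have hlt : j - 1 + 1 < N := by omega
    have := h (j - 1) hlt
    have e1 : posVal σ j = (σ ⟨j - 1, by omega⟩ : ℕ) + 1 := posVal_of_range σ hj1 (by omega)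
    have e2 : posVal σ (j + 1) = (σ ⟨j, by omega⟩ : ℕ) + 1 :=
      posVal_of_range σ (by omega) (by omega)
    have hmk : (⟨j - 1 + 1, hlt⟩ : Fin N) = ⟨j, by omega⟩ := by
      apply Fin.ext; simp; omega
    rw [hmk] at this
    split_ifs at this with hpar
    · constructor
      · intro _; omega
      · intro hj2; omega
    · constructor
      · intro hj2; omega
      · intro _; omega
  · intro h i hi
    have hz := h (i + 1) (by omega) (by omega)
    have e1 : posVal σ (i + 1) = (σ ⟨i, by omega⟩ : ℕ) + 1 :=
      posVal_of_range σ (by omega) (by omega)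
    have e2 : posVal σ (i + 1 + 1) = (σ ⟨i + 1, hi⟩ : ℕ) + 1 :=
      posVal_of_range σ (by omega) (by omega)
    rw [e1, e2] at hz
    split_ifs with hpar
    · have := hz.1 (by omega)
      omega
    · have := hz.2 (by omega)
      omega

/-- 1-based position of the maximum value `N`. -/
def mp1 (σ : Equiv.Perm (Fin N)) : ℕ :=
  if h : 0 < N then ((σ.symm ⟨N - 1, by omega⟩ : ℕ) + 1) else 0

lemma mp1_range (σ : Equiv.Perm (Fin N)) (h : 0 < N) : 1 ≤ mp1 σ ∧ mp1 σ ≤ N := by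
  unfold mp1; rw [dif_pos h]
  have := (σ.symm ⟨N - 1, by omega⟩).isLt
  omega

lemma posVal_mp1 (σ : Equiv.Perm (Fin N)) (h : 0 < N) : posVal σ (mp1 σ) = N := by
  unfold mp1; rw [dif_pos h]
  have hlt := (σ.symm ⟨N - 1, by omega⟩).isLt
  rw [posVal_of_range σ (by omega) (by omega)]
  have : (⟨(σ.symm ⟨N - 1, by omega⟩ : ℕ) + 1 - 1, by omega⟩ : Fin N) = σ.symm ⟨N - 1, by omega⟩ := by
    apply Fin.ext; simp
  rw [this]
  simp
  omega

lemma grn_eq (σ : Equiv.Perm (Fin N)) (h : 0 < N) :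
    grn σ = max (posVal σ (mp1 σ - 1)) (posVal σ (mp1 σ + 1)) := by
  obtain ⟨m, rfl⟩ : ∃ m, N = m + 1 := ⟨N - 1, by omega⟩
  show max _ _ = _
  unfold mp1
  rw [dif_pos h]
  have : (Fin.last m) = (⟨m + 1 - 1, by omega⟩ : Fin (m+1)) := by apply Fin.ext; simp
  rw [this]

lemma posVal_mul (e σ : Equiv.Perm (Fin N)) (j : ℕ) :
    posVal (e * σ) j = posVal e (posVal σ j) := by
  by_cases h : 1 ≤ j ∧ j ≤ N
  · rw [posVal_of_range σ h.1 h.2, posVal_of_range (e * σ) h.1 h.2,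
      posVal_of_range e (by omega) (by exact Nat.succ_le_of_lt (σ _).isLt)]
    have : (⟨(σ ⟨j - 1, by omega⟩ : ℕ) + 1 - 1, by omega⟩ : Fin N) = σ ⟨j - 1, by omega⟩ := by
      apply Fin.ext; simp
    rw [this]
    rfl
  · rw [posVal_of_out σ h, posVal_of_out (e * σ) h, posVal_of_out e (by omega)]

/-- two perms are equal iff they have the same posVal everywhere -/
lemma perm_ext_posVal {σ τ : Equiv.Perm (Fin N)} (h : ∀ j, posVal σ j = posVal τ j) :
    σ = τ := by
  apply Equiv.ext
  intro x
  have hx := h ((x : ℕ) + 1)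
  rw [posVal_of_range σ (by omega) (by have := x.isLt; omega),
    posVal_of_range τ (by omega) (by have := x.isLt; omega)] at hx
  have hmk : (⟨(x:ℕ) + 1 - 1, by have := x.isLt; omega⟩ : Fin N) = x := by apply Fin.ext; simp
  rw [hmk] at hx
  exact Fin.val_injective (by omega)

end Stmt5

namespace Stmt5

open Equiv

variable {N : ℕ}

/-- 1-based position of the (1-based) value `v`. -/
def pos1 (σ : Equiv.Perm (Fin N)) (v : ℕ) : ℕ :=
  if h : 1 ≤ v ∧ v ≤ N then ((σ.symm ⟨v - 1, by omega⟩ : ℕ) + 1) else 0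

lemma pos1_range (σ : Equiv.Perm (Fin N)) {v : ℕ} (h1 : 1 ≤ v) (h2 : v ≤ N) :
    1 ≤ pos1 σ v ∧ pos1 σ v ≤ N := by
  unfold pos1; rw [dif_pos ⟨h1, h2⟩]
  have := (σ.symm ⟨v - 1, by omega⟩).isLt
  omega

lemma posVal_pos1 (σ : Equiv.Perm (Fin N)) {v : ℕ} (h1 : 1 ≤ v) (h2 : v ≤ N) :
    posVal σ (pos1 σ v) = v := by
  unfold pos1; rw [dif_pos ⟨h1, h2⟩]
  have hlt := (σ.symm ⟨v - 1, by omega⟩).isLt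
  rw [posVal_of_range σ (by omega) (by omega)]
  have : (⟨(σ.symm ⟨v - 1, by omega⟩ : ℕ) + 1 - 1, by omega⟩ : Fin N) = σ.symm ⟨v - 1, by omega⟩ :=
    by apply Fin.ext; simp
  rw [this]
  simp
  omega

lemma pos1_posVal (σ : Equiv.Perm (Fin N)) {j : ℕ} (h1 : 1 ≤ j) (h2 : j ≤ N) :
    pos1 σ (posVal σ j) = j := by
  have hv1 : 1 ≤ posVal σ j := posVal_pos σ h1 h2
  have hv2 : posVal σ j ≤ N := posVal_le σ j
  apply posVal_inj σ (pos1_range σ hv1 hv2).1 (pos1_range σ hv1 hv2).2 h1 h2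
  rw [posVal_pos1 σ hv1 hv2]

lemma pos1_eq_iff (σ : Equiv.Perm (Fin N)) {v j : ℕ} (hv1 : 1 ≤ v) (hv2 : v ≤ N)
    (hj1 : 1 ≤ j) (hj2 : j ≤ N) : pos1 σ v = j ↔ posVal σ j = v := by
  constructor
  · rintro rfl; exact posVal_pos1 σ hv1 hv2
  · rintro rfl; exact pos1_posVal σ hj1 hj2

lemma mp1_eq_pos1 (σ : Equiv.Perm (Fin N)) (h : 0 < N) : mp1 σ = pos1 σ N := by
  unfold mp1 pos1
  rw [dif_pos h, dif_pos ⟨h, le_refl N⟩]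

/-- the maximum sits at an odd (1-based) position -/
lemma mp1_odd (σ : Equiv.Perm (Fin N)) (hz : Zig σ) (hN : N % 2 = 1) : mp1 σ % 2 = 1 := by
  have h0 : 0 < N := by omega
  have hr := mp1_range σ h0
  by_contra hc
  have heven : mp1 σ % 2 = 0 := by omega
  have h2 : 2 ≤ mp1 σ := by omega
  have := (hz (mp1 σ - 1) (by omega) (by omega)).1 (by omega)
  have e : mp1 σ - 1 + 1 = mp1 σ := by omega
  rw [e, posVal_mp1 σ h0] at this
  have := posVal_le σ (mp1 σ - 1)
  omega

lemma grn_le (σ : Equiv.Perm (Fin N)) (h : 0 < N) : grn σ ≤ N - 1 := by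
  rw [grn_eq σ h]
  have hr := mp1_range σ h
  have hl : posVal σ (mp1 σ - 1) ≤ N - 1 := by
    rcases Nat.lt_or_ge (posVal σ (mp1 σ - 1)) N with h' | h'
    · omega
    · exfalso
      have hle := posVal_le σ (mp1 σ - 1)
      have heq : posVal σ (mp1 σ - 1) = N := by omega
      have h1 : 1 ≤ mp1 σ - 1 := by
        by_contra hc
        have : mp1 σ - 1 = 0 := by omega
        rw [this, posVal_of_out σ (by omega)] at heq
        omega
      have := posVal_inj σ h1 (by omega) hr.1 hr.2 (by rw [heq, posVal_mp1 σ h])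
      omega
  have hrr : posVal σ (mp1 σ + 1) ≤ N - 1 := by
    rcases Nat.lt_or_ge (posVal σ (mp1 σ + 1)) N with h' | h'
    · omega
    · exfalso
      have hle := posVal_le σ (mp1 σ + 1)
      have heq : posVal σ (mp1 σ + 1) = N := by omega
      have h1 : mp1 σ + 1 ≤ N := by
        by_contra hc
        rw [posVal_of_out σ (by omega)] at heq
        omega
      have := posVal_inj σ (by omega) h1 hr.1 hr.2 (by rw [heq, posVal_mp1 σ h])
      omega
  omega

lemma grn_pos (σ : Equiv.Perm (Fin N)) (h : 2 ≤ N) : 1 ≤ grn σ := by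
  rw [grn_eq σ (by omega)]
  have hr := mp1_range σ (by omega)
  rcases Nat.lt_or_ge (mp1 σ) 2 with h' | h'
  · have : posVal σ (mp1 σ + 1) ≥ 1 := posVal_pos σ (by omega) (by omega)
    omega
  · have : posVal σ (mp1 σ - 1) ≥ 1 := posVal_pos σ (by omega) (by omega)
    omega

/-- grn in terms of an arbitrary position `m` where the max sits -/
lemma grn_eq_of_max (σ : Equiv.Perm (Fin N)) {m : ℕ} (h1 : 1 ≤ m) (h2 : m ≤ N)
    (hm : posVal σ m = N) : grn σ = max (posVal σ (m - 1)) (posVal σ (m + 1)) := by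
  have h0 : 0 < N := by omega
  have : mp1 σ = m := by
    have hr := mp1_range σ h0
    exact posVal_inj σ hr.1 hr.2 h1 h2 (by rw [posVal_mp1 σ h0, hm])
  rw [grn_eq σ h0, this]

/-! ### Reversal -/

/-- positional reversal -/
def rv (σ : Equiv.Perm (Fin N)) : Equiv.Perm (Fin N) := σ * (Fin.revPerm)

lemma posVal_rv (σ : Equiv.Perm (Fin N)) (j : ℕ) :
    posVal (rv σ) j = posVal σ (N + 1 - j) := by
  by_cases h : 1 ≤ j ∧ j ≤ N
  · rw [posVal_of_range (rv σ) h.1 h.2, posVal_of_range σ (by omega) (by omega)]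
    show ((σ (Fin.revPerm ⟨j - 1, by omega⟩) : ℕ)) + 1 = _
    have : (Fin.revPerm (⟨j - 1, by omega⟩ : Fin N)) = ⟨N + 1 - j - 1, by omega⟩ := by
      apply Fin.ext
      simp [Fin.rev]
      omega
    rw [this]
  · rw [posVal_of_out (rv σ) h, posVal_of_out σ (by omega)]

lemma rv_rv (σ : Equiv.Perm (Fin N)) : rv (rv σ) = σ := by
  apply perm_ext_posVal
  intro j
  rw [posVal_rv, posVal_rv]
  by_cases h : 1 ≤ j ∧ j ≤ N
  · have : N + 1 - (N + 1 - j) = j := by omega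
    rw [this]
  · rw [posVal_of_out σ (by omega), posVal_of_out σ (by omega)]

lemma zig_rv (σ : Equiv.Perm (Fin N)) (hN : N % 2 = 1) (hz : Zig σ) : Zig (rv σ) := by
  intro j hj1 hjN
  rw [posVal_rv, posVal_rv]
  have e1 : N + 1 - j = (N - j) + 1 := by omega
  have e2 : N + 1 - (j + 1) = N - j := by omega
  rw [e1, e2]
  have := hz (N - j) (by omega) (by omega)
  constructor
  · intro hp
    exact this.2 (by omega)
  · intro hp
    exact this.1 (by omega)

lemma mp1_rv (σ : Equiv.Perm (Fin N)) (h : 0 < N) : mp1 (rv σ) = N + 1 - mp1 σ := by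
  have hr := mp1_range σ h
  have hr' := mp1_range (rv σ) h
  have : posVal (rv σ) (N + 1 - mp1 σ) = N := by
    rw [posVal_rv]
    have : N + 1 - (N + 1 - mp1 σ) = mp1 σ := by omega
    rw [this, posVal_mp1 σ h]
  exact posVal_inj (rv σ) hr'.1 hr'.2 (by omega) (by omega)
    (by rw [posVal_mp1 (rv σ) h, this])

lemma grn_rv (σ : Equiv.Perm (Fin N)) (h : 0 < N) : grn (rv σ) = grn σ := by
  rw [grn_eq (rv σ) h, grn_eq σ h, mp1_rv σ h]
  have hr := mp1_range σ h
  rw [posVal_rv, posVal_rv]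
  have e1 : N + 1 - (N + 1 - mp1 σ - 1) = mp1 σ + 1 := by omega
  have e2 : N + 1 - (N + 1 - mp1 σ + 1) = mp1 σ - 1 := by omega
  rw [e1, e2]
  omega

end Stmt5

namespace Stmt5

open Equiv

variable {N : ℕ}

/-- swap of the values `k` and `k+1` (1-based values) -/
def swv (N : ℕ) (k : ℕ) : Equiv.Perm (Fin N) :=
  if h : 1 ≤ k ∧ k + 1 ≤ N then Equiv.swap ⟨k - 1, by omega⟩ ⟨k, by omega⟩ else 1

lemma posVal_swv {k : ℕ} (h1 : 1 ≤ k) (h2 : k + 1 ≤ N) {v : ℕ} (hv : v ≤ N) :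
    posVal (swv N k) v = if v = k then k + 1 else if v = k + 1 then k else v := by
  unfold swv
  rw [dif_pos ⟨h1, h2⟩]
  by_cases hv0 : 1 ≤ v
  · rw [posVal_of_range _ hv0 hv, Equiv.swap_apply_def]
    split_ifs with ha hb hc hd he hf hg <;>
      simp only [Fin.mk.injEq] at * <;> omega
  · have hv' : v = 0 := by omega
    subst hv'
    rw [posVal_of_out _ (by omega)]
    rw [if_neg (by omega), if_neg (by omega)]

lemma swv_mul_swv {k : ℕ} (σ : Equiv.Perm (Fin N)) :
    swv N k * (swv N k * σ) = σ := by
  unfold swv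
  split_ifs
  · rw [← mul_assoc, Equiv.swap_mul_self, one_mul]
  · rw [one_mul, one_mul]

lemma posVal_swv_mul {k : ℕ} (h1 : 1 ≤ k) (h2 : k + 1 ≤ N) (σ : Equiv.Perm (Fin N)) (j : ℕ) :
    posVal (swv N k * σ) j =
      if posVal σ j = k then k + 1 else if posVal σ j = k + 1 then k else posVal σ j := by
  rw [posVal_mul, posVal_swv h1 h2 (posVal_le σ j)]

lemma posVal_ne (σ : Equiv.Perm (Fin N)) {i j : ℕ} (hi : 1 ≤ i) (hi' : i ≤ N)
    (hj : 1 ≤ j) (hj' : j ≤ N) (hne : i ≠ j) : posVal σ i ≠ posVal σ j :=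
  fun h => hne (posVal_inj σ hi hi' hj hj' h)

/-- key lemma: swapping values `k`,`k+1` preserves `Zig` when their positions
are not adjacent. -/
lemma zig_swv {k : ℕ} (h1 : 1 ≤ k) (h2 : k + 1 ≤ N) (σ : Equiv.Perm (Fin N))
    (hz : Zig σ)
    (hadj1 : pos1 σ (k + 1) ≠ pos1 σ k + 1)
    (hadj2 : pos1 σ k ≠ pos1 σ (k + 1) + 1) :
    Zig (swv N k * σ) := by
  intro j hj1 hjN
  rw [posVal_swv_mul h1 h2, posVal_swv_mul h1 h2]
  have hz' := hz j hj1 hjN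
  have hva := posVal_pos σ hj1 (by omega)
  have hvb := posVal_pos σ (j := j + 1) (by omega) (by omega)
  have hla := posVal_le σ j
  have hlb := posVal_le σ (j + 1)
  have hne : posVal σ j ≠ posVal σ (j + 1) := posVal_ne σ hj1 (by omega) (by omega) (by omega) (by omega)
  have hpa : posVal σ j = k → pos1 σ k = j := by
    intro h; rw [← h]; exact pos1_posVal σ hj1 (by omega)
  have hpa' : posVal σ j = k + 1 → pos1 σ (k + 1) = j := by
    intro h; rw [← h]; exact pos1_posVal σ hj1 (by omega)
  have hpb : posVal σ (j + 1) = k → pos1 σ k = j + 1 := by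
    intro h; rw [← h]; exact pos1_posVal σ (by omega) (by omega)
  have hpb' : posVal σ (j + 1) = k + 1 → pos1 σ (k + 1) = j + 1 := by
    intro h; rw [← h]; exact pos1_posVal σ (by omega) (by omega)
  have key1 : ¬(posVal σ j = k ∧ posVal σ (j + 1) = k + 1) := by
    rintro ⟨ha, hb⟩
    exact hadj1 (by rw [hpa ha, hpb' hb])
  have key2 : ¬(posVal σ j = k + 1 ∧ posVal σ (j + 1) = k) := by
    rintro ⟨ha, hb⟩
    exact hadj2 (by rw [hpa' ha, hpb hb])
  constructor
  · intro hp
    have := hz'.1 hp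
    split_ifs <;> omega
  · intro hp
    have := hz'.2 hp
    split_ifs <;> omega

lemma pos1_swv_mul_left {k : ℕ} (h1 : 1 ≤ k) (h2 : k + 1 ≤ N) (σ : Equiv.Perm (Fin N)) :
    pos1 (swv N k * σ) k = pos1 σ (k + 1) := by
  have hr := pos1_range σ (v := k + 1) (by omega) (by omega)
  rw [pos1_eq_iff _ (by omega) (by omega) hr.1 hr.2, posVal_swv_mul h1 h2,
    posVal_pos1 σ (by omega) (by omega)]
  rw [if_neg (by omega), if_pos rfl]

lemma pos1_swv_mul_right {k : ℕ} (h1 : 1 ≤ k) (h2 : k + 1 ≤ N) (σ : Equiv.Perm (Fin N)) :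
    pos1 (swv N k * σ) (k + 1) = pos1 σ k := by
  have hr := pos1_range σ (v := k) (by omega) (by omega)
  rw [pos1_eq_iff _ (by omega) (by omega) hr.1 hr.2, posVal_swv_mul h1 h2,
    posVal_pos1 σ (by omega) (by omega)]
  rw [if_pos rfl]

lemma pos1_swv_mul_other {k : ℕ} (h1 : 1 ≤ k) (h2 : k + 1 ≤ N) (σ : Equiv.Perm (Fin N))
    {v : ℕ} (hv1 : 1 ≤ v) (hv2 : v ≤ N) (hvk : v ≠ k) (hvk1 : v ≠ k + 1) :
    pos1 (swv N k * σ) v = pos1 σ v := by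
  have hr := pos1_range σ hv1 hv2
  rw [pos1_eq_iff _ hv1 hv2 hr.1 hr.2, posVal_swv_mul h1 h2,
    posVal_pos1 σ hv1 hv2]
  rw [if_neg hvk, if_neg hvk1]

lemma mp1_swv_mul {k : ℕ} (h1 : 1 ≤ k) (h2 : k + 2 ≤ N) (σ : Equiv.Perm (Fin N)) :
    mp1 (swv N k * σ) = mp1 σ := by
  rw [mp1_eq_pos1 _ (by omega), mp1_eq_pos1 _ (by omega)]
  exact pos1_swv_mul_other h1 (by omega) σ (by omega) (by omega) (by omega) (by omega)

end Stmt5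

namespace Stmt5

open Equiv

variable {N : ℕ}

/-- the cycle sending (1-based) values `v ≤ j` to themselves, `j+1 ≤ v ≤ N-1` to `v+1`,
and `N` to `j+1`. -/
def cyc (N j : ℕ) : Equiv.Perm (Fin N) :=
  if h : j + 1 ≤ N then
    { toFun := fun u => ⟨if (u : ℕ) < j then u else if (u : ℕ) = N - 1 then j else (u : ℕ) + 1,
        by have := u.isLt; split_ifs <;> omega⟩
      invFun := fun w => ⟨if (w : ℕ) < j then w else if (w : ℕ) = j then N - 1 else (w : ℕ) - 1,
        by have := w.isLt; split_ifs <;> omega⟩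
      left_inv := by
        intro u
        have := u.isLt
        apply Fin.ext
        dsimp only
        split_ifs <;> omega
      right_inv := by
        intro w
        have := w.isLt
        apply Fin.ext
        dsimp only
        split_ifs <;> omega }
  else 1

lemma posVal_cyc {j : ℕ} (hj : j + 1 ≤ N) {v : ℕ} (hv : v ≤ N) :
    posVal (cyc N j) v =
      if v = 0 then 0 else if v ≤ j then v else if v = N then j + 1 else v + 1 := by
  unfold cyc
  rw [dif_pos hj]
  by_cases hv0 : 1 ≤ v
  · rw [posVal_of_range _ hv0 hv]
    show (if v - 1 < j then v - 1 else if v - 1 = N - 1 then j else v - 1 + 1) + 1 = _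
    split_ifs <;> omega
  · have : v = 0 := by omega
    subst this
    rw [posVal_of_out _ (by omega), if_pos rfl]

lemma posVal_cyc_inv {j : ℕ} (hj : j + 1 ≤ N) {v : ℕ} (hv : v ≤ N) :
    posVal (cyc N j)⁻¹ v =
      if v = 0 then 0 else if v ≤ j then v else if v = j + 1 then N else v - 1 := by
  unfold cyc
  rw [dif_pos hj]
  by_cases hv0 : 1 ≤ v
  · rw [posVal_of_range _ hv0 hv]
    show (if v - 1 < j then v - 1 else if v - 1 = j then N - 1 else v - 1 - 1) + 1 = _
    split_ifs <;> omega
  · have : v = 0 := by omega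
    subst this
    rw [posVal_of_out _ (by omega), if_pos rfl]

end Stmt5

namespace Stmt5

open Equiv

variable {N : ℕ}

/-- `𝔄_{N,j}` as a set of perms, via Zig -/
def Xset (N j : ℕ) : Set (Equiv.Perm (Fin N)) := {σ | Zig σ ∧ grn σ = j}

/-- permutations with `j` at an even (1-based) position and `j+1` adjacent to it -/
def Cset (N j : ℕ) : Set (Equiv.Perm (Fin N)) :=
  {σ | Zig σ ∧ pos1 σ j % 2 = 0 ∧
    (pos1 σ (j + 1) = pos1 σ j + 1 ∨ pos1 σ j = pos1 σ (j + 1) + 1)}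

lemma l4_fwd {j : ℕ} (hN : N % 2 = 1) (hj1 : 1 ≤ j) {σ : Equiv.Perm (Fin N)}
    (h : σ ∈ Xset N j) : cyc N j * σ ∈ Cset N j := by
  obtain ⟨hz, hg⟩ := h
  have hN2 : 2 ≤ N := by
    by_contra hc
    interval_cases N
    · simp [grn] at hg; omega
    · have := grn_le σ (by omega); omega
  have hj2 : j + 1 ≤ N := by have := grn_le σ (by omega); omega
  have hm := mp1_range σ (by omega)
  have hmodd := mp1_odd σ hz hN
  have hmax := posVal_mp1 σ (by omega)
  rw [grn_eq σ (by omega)] at hg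
  have hnl : posVal σ (mp1 σ - 1) ≤ j := by omega
  have hnr : posVal σ (mp1 σ + 1) ≤ j := by omega
  -- value N is only at mp1
  have hposN : ∀ i, 1 ≤ i → i ≤ N → posVal σ i = N → i = mp1 σ := by
    intro i h1 h2 hv
    exact posVal_inj σ h1 h2 hm.1 hm.2 (by rw [hv, hmax])
  have hzig' : Zig (cyc N j * σ) := by
    intro i hi1 hiN
    rw [posVal_mul, posVal_mul, posVal_cyc hj2 (posVal_le σ i), posVal_cyc hj2 (posVal_le σ (i+1))]
    have hva := posVal_pos σ hi1 (by omega)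
    have hvb := posVal_pos σ (j := i + 1) (by omega) (by omega)
    have hla := posVal_le σ i
    have hlb := posVal_le σ (i + 1)
    have hne : posVal σ i ≠ posVal σ (i + 1) :=
      posVal_ne σ hi1 (by omega) (by omega) (by omega) (by omega)
    have haN : posVal σ i = N → posVal σ (i + 1) ≤ j := by
      intro hv
      have := hposN i hi1 (by omega) hv
      subst this
      exact hnr
    have hbN : posVal σ (i + 1) = N → posVal σ i ≤ j := by
      intro hv
      have := hposN (i + 1) (by omega) (by omega) hv
      have : i = mp1 σ - 1 := by omega
      subst this
      exact hnl
    have hzi := hz i hi1 hiN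
    constructor
    · intro hp
      have h1 := hzi.1 hp
      have h2 := haN
      have h3 := hbN
      split_ifs <;> omega
    · intro hp
      have h1 := hzi.2 hp
      have h2 := haN
      have h3 := hbN
      split_ifs <;> omega
  refine ⟨hzig', ?_, ?_⟩
  · -- position of j in cyc*σ equals position of j in σ, which is adjacent to mp1
    have hpj : pos1 (cyc N j * σ) j = pos1 σ j := by
      have hr := pos1_range σ hj1 (by omega)
      rw [pos1_eq_iff _ hj1 (by omega) hr.1 hr.2, posVal_mul,
        posVal_pos1 σ hj1 (by omega), posVal_cyc hj2 (by omega)]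
      rw [if_neg (by omega), if_pos (le_refl j)]
    rw [hpj]
    -- pos1 σ j is mp1 - 1 or mp1 + 1
    have : pos1 σ j = mp1 σ - 1 ∨ pos1 σ j = mp1 σ + 1 := by
      rcases (show posVal σ (mp1 σ - 1) = j ∨ posVal σ (mp1 σ + 1) = j by omega) with h' | h'
      · left
        have h1 : 1 ≤ mp1 σ - 1 := by
          by_contra hc
          rw [posVal_of_out σ (by omega)] at h'
          omega
        rw [← h']
        exact pos1_posVal σ h1 (by omega)
      · right
        have h1 : mp1 σ + 1 ≤ N := by
          by_contra hc
          rw [posVal_of_out σ (by omega)] at h'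
          omega
        rw [← h']
        exact pos1_posVal σ (by omega) h1
    omega
  · -- j+1 sits at mp1 in cyc*σ ; j sits adjacent
    have hpj1 : pos1 (cyc N j * σ) (j + 1) = mp1 σ := by
      rw [pos1_eq_iff _ (by omega) (by omega) hm.1 hm.2, posVal_mul, hmax,
        posVal_cyc hj2 (le_refl N)]
      rw [if_neg (by omega), if_neg (by omega), if_pos rfl]
    have hpj : pos1 (cyc N j * σ) j = pos1 σ j := by
      have hr := pos1_range σ hj1 (by omega)
      rw [pos1_eq_iff _ hj1 (by omega) hr.1 hr.2, posVal_mul,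
        posVal_pos1 σ hj1 (by omega), posVal_cyc hj2 (by omega)]
      rw [if_neg (by omega), if_pos (le_refl j)]
    have : pos1 σ j = mp1 σ - 1 ∨ pos1 σ j = mp1 σ + 1 := by
      rcases (show posVal σ (mp1 σ - 1) = j ∨ posVal σ (mp1 σ + 1) = j by omega) with h' | h'
      · left
        have h1 : 1 ≤ mp1 σ - 1 := by
          by_contra hc
          rw [posVal_of_out σ (by omega)] at h'
          omega
        rw [← h']
        exact pos1_posVal σ h1 (by omega)
      · right
        have h1 : mp1 σ + 1 ≤ N := by
          by_contra hc
          rw [posVal_of_out σ (by omega)] at h'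
          omega
        rw [← h']
        exact pos1_posVal σ (by omega) h1
    rw [hpj1, hpj]
    omega

end Stmt5

namespace Stmt5

open Equiv

variable {N : ℕ}

lemma l4_bwd {j : ℕ} (hN : N % 2 = 1) (hj1 : 1 ≤ j) (hj2 : j + 1 ≤ N)
    {σ : Equiv.Perm (Fin N)} (h : σ ∈ Cset N j) : (cyc N j)⁻¹ * σ ∈ Xset N j := by
  obtain ⟨hz, hqe, hadj⟩ := h
  have hqr := pos1_range σ hj1 (by omega)
  have hqqr := pos1_range σ (v := j + 1) (by omega) hj2
  set q := pos1 σ j with hqdef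
  set qq := pos1 σ (j + 1) with hqqdef
  have hq : posVal σ q = j := posVal_pos1 σ hj1 (by omega)
  have hqq : posVal σ qq = j + 1 := posVal_pos1 σ (by omega) hj2
  have hqqodd : qq % 2 = 1 := by omega
  have hnbl : posVal σ (qq - 1) ≤ j := by
    by_cases hc : 2 ≤ qq
    · have := (hz (qq - 1) (by omega) (by omega)).2 (by omega)
      have e : qq - 1 + 1 = qq := by omega
      rw [e, hqq] at this
      omega
    · have : qq = 1 := by omega
      rw [this, posVal_of_out σ (by omega)]
      omega
  have hnbr : posVal σ (qq + 1) ≤ j := by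
    by_cases hc : qq + 1 ≤ N
    · have := (hz qq (by omega) hc).1 hqqodd
      rw [hqq] at this
      omega
    · rw [posVal_of_out σ (by omega)]
      omega
  have hzig : Zig ((cyc N j)⁻¹ * σ) := by
    intro i hi1 hiN
    rw [posVal_mul, posVal_mul, posVal_cyc_inv hj2 (posVal_le σ i),
      posVal_cyc_inv hj2 (posVal_le σ (i + 1))]
    have hva := posVal_pos σ hi1 (by omega)
    have hvb := posVal_pos σ (j := i + 1) (by omega) (by omega)
    have hla := posVal_le σ i
    have hlb := posVal_le σ (i + 1)
    have hne : posVal σ i ≠ posVal σ (i + 1) :=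
      posVal_ne σ hi1 (by omega) (by omega) (by omega) (by omega)
    have haJ : posVal σ i = j + 1 → posVal σ (i + 1) ≤ j := by
      intro hv
      have : i = qq := by
        rw [hqqdef, ← hv]
        exact (pos1_posVal σ hi1 (by omega)).symm
      rw [this]
      exact hnbr
    have hbJ : posVal σ (i + 1) = j + 1 → posVal σ i ≤ j := by
      intro hv
      have hiqq : i + 1 = qq := by
        rw [hqqdef, ← hv]
        exact (pos1_posVal σ (j := i + 1) (by omega) (by omega)).symm
      have : i = qq - 1 := by omega
      rw [this]
      exact hnbl
    have hzi := hz i hi1 hiN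
    constructor
    · intro hp
      have h1 := hzi.1 hp
      split_ifs <;> omega
    · intro hp
      have h1 := hzi.2 hp
      split_ifs <;> omega
  refine ⟨hzig, ?_⟩
  have hmaxqq : posVal ((cyc N j)⁻¹ * σ) qq = N := by
    rw [posVal_mul, hqq, posVal_cyc_inv hj2 (by omega)]
    rw [if_neg (by omega), if_neg (by omega), if_pos rfl]
  rw [grn_eq_of_max ((cyc N j)⁻¹ * σ) hqqr.1 hqqr.2 hmaxqq]
  have hvq : posVal ((cyc N j)⁻¹ * σ) q = j := by
    rw [posVal_mul, hq, posVal_cyc_inv hj2 (by omega)]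
    rw [if_neg (by omega), if_pos (le_refl j)]
  have hother : ∀ i, i ≠ q → (i = qq - 1 ∨ i = qq + 1) → posVal ((cyc N j)⁻¹ * σ) i < j := by
    intro i hiq hii
    have hb : posVal σ i ≤ j := by rcases hii with rfl | rfl; exact hnbl; exact hnbr
    have hbj : posVal σ i ≠ j := by
      by_cases hir : 1 ≤ i ∧ i ≤ N
      · intro hc
        apply hiq
        rw [hqdef, ← hc]
        exact (pos1_posVal σ hir.1 hir.2).symm
      · rw [posVal_of_out σ hir]
        omega
    rw [posVal_mul, posVal_cyc_inv hj2 (posVal_le σ i)]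
    have := posVal_le σ i
    split_ifs <;> omega
  rcases (show qq = q + 1 ∨ q = qq + 1 by omega) with hc | hc
  · have e1 : qq - 1 = q := by omega
    rw [e1, hvq]
    have := hother (qq + 1) (by omega) (Or.inr rfl)
    omega
  · have e1 : qq + 1 = q := by omega
    rw [e1, hvq]
    have := hother (qq - 1) (by omega) (Or.inl rfl)
    omega

/-- L4: `|𝔄_{N,j}| = |C_{N,j}|` -/
lemma card_Xset_eq_card_Cset {j : ℕ} (hN : N % 2 = 1) (hj1 : 1 ≤ j) (hj2 : j + 1 ≤ N) :
    Nat.card (Xset N j) = Nat.card (Cset N j) := by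
  apply Nat.card_congr
  exact {
    toFun := fun σ => ⟨cyc N j * σ.1, l4_fwd hN hj1 σ.2⟩
    invFun := fun σ => ⟨(cyc N j)⁻¹ * σ.1, l4_bwd hN hj1 hj2 σ.2⟩
    left_inv := by intro σ; apply Subtype.ext; simp
    right_inv := by intro σ; apply Subtype.ext; simp }

end Stmt5

namespace Stmt5

open Equiv

variable {N : ℕ}

/-- permutations with value `j` at an even (1-based) position -/
def Vset (N j : ℕ) : Set (Equiv.Perm (Fin N)) := {σ | Zig σ ∧ pos1 σ j % 2 = 0}

lemma Cset_subset_Vset {j : ℕ} : Cset N j ⊆ Vset N j := fun σ h => ⟨h.1, h.2.1⟩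

/-- `j` cannot be adjacent to `j+1` when `j+1` is at an even position (valley) -/
lemma no_adj_of_valley {j : ℕ} (hj1 : 1 ≤ j) (hj2 : j + 1 ≤ N)
    {σ : Equiv.Perm (Fin N)} (hz : Zig σ) (he : pos1 σ (j + 1) % 2 = 0) :
    pos1 σ (j + 1) ≠ pos1 σ j + 1 ∧ pos1 σ j ≠ pos1 σ (j + 1) + 1 := by
  have hqr := pos1_range σ hj1 (by omega)
  have hqqr := pos1_range σ (v := j + 1) (by omega) hj2
  have hq : posVal σ (pos1 σ j) = j := posVal_pos1 σ hj1 (by omega)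
  have hqq : posVal σ (pos1 σ (j + 1)) = j + 1 := posVal_pos1 σ (by omega) hj2
  constructor
  · intro hc
    -- j at position p-1 (odd), j+1 at p (even): pair (p-1, p) with p-1 odd requires desc
    have := (hz (pos1 σ j) (by omega) (by omega)).1 (by omega)
    rw [hq, ← hc, hqq] at this
    omega
  · intro hc
    -- j+1 at position p (even), j at p+1: pair (p, p+1) with p even requires asc
    have := (hz (pos1 σ (j + 1)) (by omega) (by omega)).2 (by omega)
    rw [hqq, ← hc, hq] at this
    omega

/-- L5: `|V_j| = |V_{j+1}| + |C_j|` -/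
lemma card_Vset_succ {j : ℕ} (hj1 : 1 ≤ j) (hj2 : j + 1 ≤ N) :
    Nat.card (Vset N j) = Nat.card (Vset N (j + 1)) + Nat.card (Cset N j) := by
  rw [Nat.card_coe_set_eq, Nat.card_coe_set_eq, Nat.card_coe_set_eq]
  rw [← Set.ncard_diff_add_ncard_of_subset (Cset_subset_Vset (N := N) (j := j))
    (Set.toFinite _)]
  congr 1
  rw [← Nat.card_coe_set_eq, ← Nat.card_coe_set_eq]
  apply Nat.card_congr
  have fwd : ∀ σ ∈ (Vset N j \ Cset N j), swv N j * σ ∈ Vset N (j + 1) := by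
    rintro σ ⟨⟨hz, he⟩, hnc⟩
    have hnadj : pos1 σ (j + 1) ≠ pos1 σ j + 1 ∧ pos1 σ j ≠ pos1 σ (j + 1) + 1 := by
      by_contra hc
      apply hnc
      refine ⟨hz, he, ?_⟩
      omega
    refine ⟨zig_swv hj1 hj2 σ hz hnadj.1 hnadj.2, ?_⟩
    rw [pos1_swv_mul_right hj1 hj2]
    exact he
  have bwd : ∀ σ ∈ Vset N (j + 1), swv N j * σ ∈ (Vset N j \ Cset N j) := by
    rintro σ ⟨hz, he⟩
    have hnadj := no_adj_of_valley hj1 hj2 hz he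
    have hz' := zig_swv hj1 hj2 σ hz hnadj.1 hnadj.2
    have hp1 : pos1 (swv N j * σ) j = pos1 σ (j + 1) := pos1_swv_mul_left hj1 hj2 σ
    have hp2 : pos1 (swv N j * σ) (j + 1) = pos1 σ j := pos1_swv_mul_right hj1 hj2 σ
    refine ⟨⟨hz', by rw [hp1]; exact he⟩, ?_⟩
    rintro ⟨-, -, hadj⟩
    rw [hp1, hp2] at hadj
    rcases hadj with hc | hc
    · exact hnadj.2 hc
    · exact hnadj.1 hc
  exact {
    toFun := fun σ => ⟨swv N j * σ.1, fwd σ.1 σ.2⟩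
    invFun := fun σ => ⟨swv N j * σ.1, bwd σ.1 σ.2⟩
    left_inv := by intro σ; apply Subtype.ext; exact swv_mul_swv σ.1
    right_inv := by intro σ; apply Subtype.ext; exact swv_mul_swv σ.1 }

end Stmt5

namespace Stmt5

open Equiv

variable {N : ℕ}

/-- permutations whose maximum has neighbor values `{k, k-1}` (with the convention
that a missing neighbor has value `0`, covering `k = 1`). -/
def APset (N k : ℕ) : Set (Equiv.Perm (Fin N)) := {σ | Zig σ ∧
  ((posVal σ (mp1 σ - 1) = k ∧ posVal σ (mp1 σ + 1) = k - 1) ∨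
   (posVal σ (mp1 σ - 1) = k - 1 ∧ posVal σ (mp1 σ + 1) = k))}

/-- permutations with `grn = k` such that the value `k+1` lies just beyond `k`. -/
def Bset (N k : ℕ) : Set (Equiv.Perm (Fin N)) := {σ | Zig σ ∧ grn σ = k ∧
  ((posVal σ (mp1 σ - 1) = k ∧ posVal σ (mp1 σ - 2) = k + 1) ∨
   (posVal σ (mp1 σ + 1) = k ∧ posVal σ (mp1 σ + 2) = k + 1))}

lemma grn_cases {j : ℕ} (h0 : 0 < N) (hj : 1 ≤ j) {σ : Equiv.Perm (Fin N)}
    (hg : grn σ = j) :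
    (posVal σ (mp1 σ - 1) = j ∧ posVal σ (mp1 σ + 1) + 1 ≤ j) ∨
    (posVal σ (mp1 σ + 1) = j ∧ posVal σ (mp1 σ - 1) + 1 ≤ j) := by
  rw [grn_eq σ h0] at hg
  have hm := mp1_range σ h0
  have hboth : ¬(posVal σ (mp1 σ - 1) = j ∧ posVal σ (mp1 σ + 1) = j) := by
    rintro ⟨h1, h2⟩
    have hr1 : 1 ≤ mp1 σ - 1 ∧ mp1 σ - 1 ≤ N := by
      have := (posVal_pos_iff σ (j := mp1 σ - 1)).mp (by omega)
      exact this
    have hr2 : 1 ≤ mp1 σ + 1 ∧ mp1 σ + 1 ≤ N := by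
      have := (posVal_pos_iff σ (j := mp1 σ + 1)).mp (by omega)
      exact this
    have := posVal_inj σ hr1.1 hr1.2 hr2.1 hr2.2 (by rw [h1, h2])
    omega
  omega

lemma APset_subset_Xset {k : ℕ} (h0 : 0 < N) (hk : 1 ≤ k) :
    APset N k ⊆ Xset N k := by
  rintro σ ⟨hz, hc⟩
  refine ⟨hz, ?_⟩
  rw [grn_eq σ h0]
  omega

lemma Bset_subset_Xset {k : ℕ} : Bset N k ⊆ Xset N k := fun σ h => ⟨h.1, h.2.1⟩

section L1

variable {k : ℕ}

lemma l1_fwd (hN : N % 2 = 1) (hk1 : 1 ≤ k) (hk2 : k + 2 ≤ N) {σ : Equiv.Perm (Fin N)}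
    (h : σ ∈ Xset N (k + 1) \ APset N (k + 1)) :
    swv N k * σ ∈ Xset N k \ Bset N k := by
  obtain ⟨⟨hz, hg⟩, hnap⟩ := h
  have h0 : 0 < N := by omega
  have hm := mp1_range σ h0
  have hmodd := mp1_odd σ hz hN
  have hmax := posVal_mp1 σ h0
  have hcases := grn_cases h0 (by omega) hg
  have hnap' : ¬((posVal σ (mp1 σ - 1) = k + 1 ∧ posVal σ (mp1 σ + 1) = k) ∨
      (posVal σ (mp1 σ - 1) = k ∧ posVal σ (mp1 σ + 1) = k + 1)) := by
    intro hc
    exact hnap ⟨hz, by omega⟩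
  -- the position of k+1 (adjacent to max) is even; k is not adjacent to k+1
  have hposk1 : pos1 σ (k + 1) = mp1 σ - 1 ∨ pos1 σ (k + 1) = mp1 σ + 1 := by
    rcases hcases with ⟨h1, _⟩ | ⟨h1, _⟩
    · left
      have hr : 1 ≤ mp1 σ - 1 ∧ mp1 σ - 1 ≤ N := (posVal_pos_iff σ).mp (by omega)
      rw [← h1]; exact pos1_posVal σ hr.1 hr.2
    · right
      have hr : 1 ≤ mp1 σ + 1 ∧ mp1 σ + 1 ≤ N := (posVal_pos_iff σ).mp (by omega)
      rw [← h1]; exact pos1_posVal σ hr.1 hr.2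
  have hpos_even : pos1 σ (k + 1) % 2 = 0 := by omega
  have hnadj := no_adj_of_valley hk1 (by omega) hz hpos_even
  have hz' := zig_swv hk1 (by omega) σ hz hnadj.1 hnadj.2
  have hm' : mp1 (swv N k * σ) = mp1 σ := mp1_swv_mul hk1 hk2 σ
  have hpv : ∀ i, posVal (swv N k * σ) i =
      if posVal σ i = k then k + 1 else if posVal σ i = k + 1 then k else posVal σ i :=
    posVal_swv_mul hk1 (by omega) σ
  have hw1 := posVal_le σ (mp1 σ - 1)
  have hw2 := posVal_le σ (mp1 σ + 1)
  have hg' : grn (swv N k * σ) = k := by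
    rw [grn_eq _ h0, hm', hpv, hpv]
    rcases hcases with ⟨h1, h2⟩ | ⟨h1, h2⟩ <;> split_ifs <;> omega
  refine ⟨⟨hz', hg'⟩, ?_⟩
  rintro ⟨-, -, hB⟩
  rw [hm', hpv, hpv, hpv, hpv] at hB
  -- hB forces k+1 to be at distance 2 from max and k adjacent to it in swv*σ,
  -- i.e. in σ the values k, k+1 are adjacent; contradiction with hnadj
  rcases hB with ⟨hb1, hb2⟩ | ⟨hb1, hb2⟩
  · -- k at mp1-1, k+1 at mp1-2 in σ' ; so in σ : k+1 at mp1-1, k at mp1-2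
    have e1 : posVal σ (mp1 σ - 1) = k + 1 := by
      rcases hcases with ⟨h1, h2⟩ | ⟨h1, h2⟩
      · exact h1
      · exfalso; revert hb1; split_ifs <;> omega
    have e2 : posVal σ (mp1 σ - 2) = k := by
      revert hb2; split_ifs <;> omega
    have hr1 : 1 ≤ mp1 σ - 1 ∧ mp1 σ - 1 ≤ N := (posVal_pos_iff σ).mp (by omega)
    have hr2 : 1 ≤ mp1 σ - 2 ∧ mp1 σ - 2 ≤ N := (posVal_pos_iff σ).mp (by omega)
    have p1 : pos1 σ (k + 1) = mp1 σ - 1 := by rw [← e1]; exact pos1_posVal σ hr1.1 hr1.2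
    have p2 : pos1 σ k = mp1 σ - 2 := by rw [← e2]; exact pos1_posVal σ hr2.1 hr2.2
    exact hnadj.1 (by omega)
  · have e1 : posVal σ (mp1 σ + 1) = k + 1 := by
      rcases hcases with ⟨h1, h2⟩ | ⟨h1, h2⟩
      · exfalso; revert hb1; split_ifs <;> omega
      · exact h1
    have e2 : posVal σ (mp1 σ + 2) = k := by
      revert hb2; split_ifs <;> omega
    have hr1 : 1 ≤ mp1 σ + 1 ∧ mp1 σ + 1 ≤ N := (posVal_pos_iff σ).mp (by omega)
    have hr2 : 1 ≤ mp1 σ + 2 ∧ mp1 σ + 2 ≤ N := (posVal_pos_iff σ).mp (by omega)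
    have p1 : pos1 σ (k + 1) = mp1 σ + 1 := by rw [← e1]; exact pos1_posVal σ hr1.1 hr1.2
    have p2 : pos1 σ k = mp1 σ + 2 := by rw [← e2]; exact pos1_posVal σ hr2.1 hr2.2
    exact hnadj.2 (by omega)

lemma l1_bwd (hN : N % 2 = 1) (hk1 : 1 ≤ k) (hk2 : k + 2 ≤ N) {σ : Equiv.Perm (Fin N)}
    (h : σ ∈ Xset N k \ Bset N k) :
    swv N k * σ ∈ Xset N (k + 1) \ APset N (k + 1) := by
  obtain ⟨⟨hz, hg⟩, hnb⟩ := h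
  have h0 : 0 < N := by omega
  have hm := mp1_range σ h0
  have hmodd := mp1_odd σ hz hN
  have hmax := posVal_mp1 σ h0
  have hcases := grn_cases h0 hk1 hg
  have hw1 := posVal_le σ (mp1 σ - 1)
  have hw2 := posVal_le σ (mp1 σ + 1)
  -- position of k
  have hposk : pos1 σ k = mp1 σ - 1 ∨ pos1 σ k = mp1 σ + 1 := by
    rcases hcases with ⟨h1, _⟩ | ⟨h1, _⟩
    · left
      have hr : 1 ≤ mp1 σ - 1 ∧ mp1 σ - 1 ≤ N := (posVal_pos_iff σ).mp (by omega)
      rw [← h1]; exact pos1_posVal σ hr.1 hr.2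
    · right
      have hr : 1 ≤ mp1 σ + 1 ∧ mp1 σ + 1 ≤ N := (posVal_pos_iff σ).mp (by omega)
      rw [← h1]; exact pos1_posVal σ hr.1 hr.2
  -- k+1 is not adjacent to k in σ
  have hposk1r := pos1_range σ (v := k + 1) (by omega) (by omega)
  have hvk1 : posVal σ (pos1 σ (k + 1)) = k + 1 := posVal_pos1 σ (by omega) (by omega)
  have hnadj1 : pos1 σ (k + 1) ≠ pos1 σ k + 1 := by
    intro hc
    rcases hposk with hp | hp
    · -- pos1 (k+1) = mp1 σ : impossible, value there is N
      have : pos1 σ (k + 1) = mp1 σ := by omega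
      rw [this, posVal_mp1 σ h0] at hvk1
      omega
    · -- pos1 (k+1) = mp1 σ + 2 : Bset (right) holds, contradiction
      apply hnb
      refine ⟨hz, hg, Or.inr ⟨?_, ?_⟩⟩
      · rcases hcases with ⟨h1, h2⟩ | ⟨h1, h2⟩
        · -- pos1 k = mp1+1 but case says k at mp1-1: both give contradiction via injectivity
          exfalso
          have hr : 1 ≤ mp1 σ - 1 ∧ mp1 σ - 1 ≤ N := (posVal_pos_iff σ).mp (by omega)
          have := pos1_posVal σ hr.1 hr.2
          rw [h1] at this
          omega
        · exact h1
      · rw [← hvk1, hc, hp]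
  have hnadj2 : pos1 σ k ≠ pos1 σ (k + 1) + 1 := by
    intro hc
    rcases hposk with hp | hp
    · -- pos1 (k+1) = mp1 σ - 2 : Bset (left) holds
      apply hnb
      refine ⟨hz, hg, Or.inl ⟨?_, ?_⟩⟩
      · rcases hcases with ⟨h1, h2⟩ | ⟨h1, h2⟩
        · exact h1
        · exfalso
          have hr : 1 ≤ mp1 σ + 1 ∧ mp1 σ + 1 ≤ N := (posVal_pos_iff σ).mp (by omega)
          have := pos1_posVal σ hr.1 hr.2
          rw [h1] at this
          omega
      · rw [← hvk1]
        congr 1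
        omega
    · -- pos1 (k+1) = mp1 σ : impossible
      have : pos1 σ (k + 1) = mp1 σ := by omega
      rw [this, posVal_mp1 σ h0] at hvk1
      omega
  have hz' := zig_swv hk1 (by omega) σ hz hnadj1 hnadj2
  have hm' : mp1 (swv N k * σ) = mp1 σ := mp1_swv_mul hk1 hk2 σ
  have hpv : ∀ i, posVal (swv N k * σ) i =
      if posVal σ i = k then k + 1 else if posVal σ i = k + 1 then k else posVal σ i :=
    posVal_swv_mul hk1 (by omega) σ
  -- the neighbor on the other side of the max is < k and in particular ≠ k, k+1
  have hg' : grn (swv N k * σ) = k + 1 := by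
    rw [grn_eq _ h0, hm', hpv, hpv]
    rcases hcases with ⟨h1, h2⟩ | ⟨h1, h2⟩ <;> split_ifs <;> omega
  refine ⟨⟨hz', hg'⟩, ?_⟩
  rintro ⟨-, hAP⟩
  rw [hm', hpv, hpv] at hAP
  rcases hcases with ⟨h1, h2⟩ | ⟨h1, h2⟩ <;> revert hAP <;> split_ifs <;> omega

lemma l1 (hN : N % 2 = 1) (hk1 : 1 ≤ k) (hk2 : k + 2 ≤ N) :
    Nat.card (Xset N (k + 1)) + Nat.card (Bset N k) =
      Nat.card (APset N (k + 1)) + Nat.card (Xset N k) := by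
  have h0 : 0 < N := by omega
  have hXk1 : Nat.card (Xset N (k + 1)) =
      Nat.card ((Xset N (k + 1) \ APset N (k + 1) : Set _)) + Nat.card (APset N (k + 1)) := by
    rw [Nat.card_coe_set_eq, Nat.card_coe_set_eq, Nat.card_coe_set_eq]
    exact (Set.ncard_diff_add_ncard_of_subset (APset_subset_Xset h0 (by omega)) (Set.toFinite _)).symm
  have hXk : Nat.card (Xset N k) =
      Nat.card ((Xset N k \ Bset N k : Set _)) + Nat.card (Bset N k) := by
    rw [Nat.card_coe_set_eq, Nat.card_coe_set_eq, Nat.card_coe_set_eq]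
    exact (Set.ncard_diff_add_ncard_of_subset (Bset_subset_Xset) (Set.toFinite _)).symm
  have key : Nat.card ((Xset N (k + 1) \ APset N (k + 1) : Set _)) =
      Nat.card ((Xset N k \ Bset N k : Set _)) := by
    apply Nat.card_congr
    exact {
      toFun := fun σ => ⟨swv N k * σ.1, l1_fwd hN hk1 hk2 σ.2⟩
      invFun := fun σ => ⟨swv N k * σ.1, l1_bwd hN hk1 hk2 σ.2⟩
      left_inv := by intro σ; apply Subtype.ext; exact swv_mul_swv σ.1
      right_inv := by intro σ; apply Subtype.ext; exact swv_mul_swv σ.1 }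
  omega

end L1

end Stmt5

namespace Stmt5

open Equiv

variable {M : ℕ}

/-- total version of a permutation of `Fin M` as a function `ℕ → ℕ` (0-based) -/
def tv (τ : Equiv.Perm (Fin M)) (x : ℕ) : ℕ := if h : x < M then (τ ⟨x, h⟩ : ℕ) else 0

lemma tv_lt (τ : Equiv.Perm (Fin M)) {x : ℕ} (h : x < M) : tv τ x < M := by
  unfold tv; rw [dif_pos h]; exact (τ ⟨x, h⟩).isLt

lemma tv_inj (τ : Equiv.Perm (Fin M)) {x y : ℕ} (hx : x < M) (hy : y < M)
    (h : tv τ x = tv τ y) : x = y := by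
  unfold tv at h
  rw [dif_pos hx, dif_pos hy] at h
  have := τ.injective (Fin.val_injective h)
  exact congrArg Fin.val this

lemma posVal_eq_tv (τ : Equiv.Perm (Fin M)) {j : ℕ} (h1 : 1 ≤ j) (h2 : j ≤ M) :
    posVal τ j = tv τ (j - 1) + 1 := by
  rw [posVal_of_range τ h1 h2]
  unfold tv
  rw [dif_pos (by omega)]

/-- the insertion surgery, as a value-level function, 0-based.
Positions `< p0` keep their (relabeled) values, positions `p0`, `p0+1` get the new
values `s0` and `M+1`, and positions `> p0+1` carry the shifted (relabeled) values. -/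
def insV (τ : Equiv.Perm (Fin M)) (s0 p0 : ℕ) (x : ℕ) : ℕ :=
  if x < p0 then (if tv τ x < s0 then tv τ x else tv τ x + 1)
  else if x = p0 then s0
  else if x = p0 + 1 then M + 1
  else (if tv τ (x - 2) < s0 then tv τ (x - 2) else tv τ (x - 2) + 1)

lemma insV_lt (τ : Equiv.Perm (Fin M)) {s0 p0 : ℕ} (hs : s0 ≤ M) (hp : p0 ≤ M)
    {x : ℕ} (hx : x < M + 2) : insV τ s0 p0 x < M + 2 := by
  unfold insV
  have h1 : x < p0 → tv τ x < M := fun h => tv_lt τ (by omega)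
  have h2 : ¬(x < p0) → x ≠ p0 → x ≠ p0 + 1 → tv τ (x - 2) < M := by
    intro a b c; exact tv_lt τ (by omega)
  split_ifs <;> omega

set_option maxHeartbeats 1600000 in
lemma insV_inj (τ : Equiv.Perm (Fin M)) {s0 p0 : ℕ} (hs : s0 ≤ M) (hp : p0 ≤ M)
    {a b : ℕ} (ha : a < M + 2) (hb : b < M + 2) (hab : insV τ s0 p0 a = insV τ s0 p0 b) :
    a = b := by
  unfold insV at hab
  have h1 : a < p0 → tv τ a < M := fun h => tv_lt τ (by omega)
  have h2 : ¬(a < p0) → a ≠ p0 → a ≠ p0 + 1 → tv τ (a - 2) < M := by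
    intro h h' h''; exact tv_lt τ (by omega)
  have h3 : b < p0 → tv τ b < M := fun h => tv_lt τ (by omega)
  have h4 : ¬(b < p0) → b ≠ p0 → b ≠ p0 + 1 → tv τ (b - 2) < M := by
    intro h h' h''; exact tv_lt τ (by omega)
  have i1 : a < p0 → b < p0 → tv τ a = tv τ b → a = b := by
    intro x y h; exact tv_inj τ (by omega) (by omega) h
  have i2 : a < p0 → ¬(b < p0) → b ≠ p0 → b ≠ p0 + 1 → tv τ a = tv τ (b - 2) → a = b - 2 := by
    intro x y y' y'' h; exact tv_inj τ (by omega) (by omega) h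
  have i3 : ¬(a < p0) → a ≠ p0 → a ≠ p0 + 1 → b < p0 → tv τ (a - 2) = tv τ b → a - 2 = b := by
    intro x x' x'' y h; exact tv_inj τ (by omega) (by omega) h
  have i4 : ¬(a < p0) → a ≠ p0 → a ≠ p0 + 1 → ¬(b < p0) → b ≠ p0 → b ≠ p0 + 1 →
      tv τ (a - 2) = tv τ (b - 2) → a - 2 = b - 2 := by
    intro x x' x'' y y' y'' h; exact tv_inj τ (by omega) (by omega) h
  split_ifs at hab <;> omega

/-- the insertion surgery as a permutation of `Fin (M+2)` -/
noncomputable def ins (τ : Equiv.Perm (Fin M)) (s0 p0 : ℕ) : Equiv.Perm (Fin (M + 2)) :=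
  if h : s0 ≤ M ∧ p0 ≤ M then
    Equiv.ofBijective (fun x => ⟨insV τ s0 p0 x, insV_lt τ h.1 h.2 x.isLt⟩)
      (Finite.injective_iff_bijective.mp (fun a b hab =>
        Fin.val_injective (insV_inj τ h.1 h.2 a.isLt b.isLt (by
          have := congrArg Fin.val hab
          simpa using this))))
  else 1

lemma posVal_ins (τ : Equiv.Perm (Fin M)) {s0 p0 : ℕ} (hs : s0 ≤ M) (hp : p0 ≤ M)
    {j : ℕ} (h1 : 1 ≤ j) (h2 : j ≤ M + 2) :
    posVal (ins τ s0 p0) j = insV τ s0 p0 (j - 1) + 1 := by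
  unfold ins
  rw [dif_pos ⟨hs, hp⟩, posVal_of_range _ h1 h2]
  rfl

/-- paper-valued relabeling: `v ↦ v` if `v < s`, else `v+1` -/
def rfp (s v : ℕ) : ℕ := if v < s then v else v + 1

lemma ins_w_lt (τ : Equiv.Perm (Fin M)) {s0 p0 : ℕ} (hs : s0 ≤ M) (hp : p0 ≤ M)
    {j : ℕ} (hj : j ≤ p0) :
    posVal (ins τ s0 p0) j = rfp (s0 + 1) (posVal τ j) := by
  by_cases h1 : 1 ≤ j
  · rw [posVal_ins τ hs hp h1 (by omega), posVal_eq_tv τ h1 (by omega)]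
    unfold insV rfp
    rw [if_pos (by omega)]
    split_ifs <;> omega
  · have : j = 0 := by omega
    subst this
    rw [posVal_of_out _ (by omega), posVal_of_out _ (by omega)]
    unfold rfp
    rw [if_pos (by omega)]

lemma ins_w_s (τ : Equiv.Perm (Fin M)) {s0 p0 : ℕ} (hs : s0 ≤ M) (hp : p0 ≤ M) :
    posVal (ins τ s0 p0) (p0 + 1) = s0 + 1 := by
  rw [posVal_ins τ hs hp (by omega) (by omega)]
  unfold insV
  rw [if_neg (by omega), if_pos (by omega)]

lemma ins_w_max (τ : Equiv.Perm (Fin M)) {s0 p0 : ℕ} (hs : s0 ≤ M) (hp : p0 ≤ M) :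
    posVal (ins τ s0 p0) (p0 + 2) = M + 2 := by
  rw [posVal_ins τ hs hp (by omega) (by omega)]
  unfold insV
  rw [if_neg (by omega), if_neg (by omega), if_pos (by omega)]

lemma ins_w_gt (τ : Equiv.Perm (Fin M)) {s0 p0 : ℕ} (hs : s0 ≤ M) (hp : p0 ≤ M)
    {j : ℕ} (hj : p0 + 3 ≤ j) :
    posVal (ins τ s0 p0) j = rfp (s0 + 1) (posVal τ (j - 2)) := by
  by_cases h2 : j ≤ M + 2
  · rw [posVal_ins τ hs hp (by omega) h2, posVal_eq_tv τ (by omega) (by omega)]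
    unfold insV rfp
    rw [if_neg (by omega), if_neg (by omega), if_neg (by omega)]
    have e : j - 1 - 2 = j - 2 - 1 := by omega
    rw [e]
    split_ifs <;> omega
  · rw [posVal_of_out _ (by omega), posVal_of_out _ (by omega)]
    unfold rfp
    rw [if_pos (by omega)]

lemma mp1_ins (τ : Equiv.Perm (Fin M)) {s0 p0 : ℕ} (hs : s0 ≤ M) (hp : p0 ≤ M) :
    mp1 (ins τ s0 p0) = p0 + 2 := by
  have hr := mp1_range (ins τ s0 p0) (by omega)
  exact posVal_inj _ hr.1 hr.2 (by omega) (by omega)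
    (by rw [posVal_mp1 _ (by omega), ins_w_max τ hs hp])

end Stmt5


namespace Stmt5

open Equiv

variable {M : ℕ}

lemma rfp_lt_iff {s a b : ℕ} : rfp s a < rfp s b ↔ a < b := by
  unfold rfp; split_ifs <;> omega

lemma rfp_le (s a : ℕ) : rfp s a ≤ a + 1 := by unfold rfp; split_ifs <;> omega

lemma rfp_inj {s a b : ℕ} (h : rfp s a = rfp s b) : a = b := by
  revert h; unfold rfp; split_ifs <;> omega

/-- forward Zig transfer for the insertion -/
lemma zig_ins {s0 p0 : ℕ} (τ : Equiv.Perm (Fin M)) (hz : Zig τ) (hs : s0 ≤ M) (hp : p0 ≤ M)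
    (hpodd : p0 % 2 = 1) (hleft : s0 + 1 < rfp (s0 + 1) (posVal τ p0)) :
    Zig (ins τ s0 p0) := by
  intro i hi1 hiN
  rcases (show i + 1 ≤ p0 ∨ i = p0 ∨ i = p0 + 1 ∨ i = p0 + 2 ∨ p0 + 3 ≤ i by omega)
    with hc | hc | hc | hc | hc
  · rw [ins_w_lt τ hs hp (by omega : i ≤ p0), ins_w_lt τ hs hp (by omega : i + 1 ≤ p0)]
    have := hz i hi1 (by omega)
    constructor
    · intro hpar
      exact rfp_lt_iff.mpr (this.1 hpar)
    · intro hpar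
      exact rfp_lt_iff.mpr (this.2 hpar)
  · subst hc
    rw [ins_w_lt τ hs hp (le_refl _), ins_w_s τ hs hp]
    constructor
    · intro _; exact hleft
    · intro hpar; omega
  · subst hc
    have e : p0 + 1 + 1 = p0 + 2 := rfl
    rw [ins_w_s τ hs hp, e, ins_w_max τ hs hp]
    constructor
    · intro hpar; omega
    · intro _; omega
  · subst hc
    have e : p0 + 2 + 1 = p0 + 3 := rfl
    rw [ins_w_max τ hs hp, e, ins_w_gt τ hs hp (by omega)]
    constructor
    · intro _
      have h1 := rfp_le (s0 + 1) (posVal τ (p0 + 3 - 2))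
      have h2 := posVal_le τ (p0 + 3 - 2)
      omega
    · intro hpar; omega
  · rw [ins_w_gt τ hs hp (by omega : p0 + 3 ≤ i), ins_w_gt τ hs hp (by omega : p0 + 3 ≤ i + 1)]
    have e : i + 1 - 2 = i - 2 + 1 := by omega
    rw [e]
    have := hz (i - 2) (by omega) (by omega)
    constructor
    · intro hpar
      exact rfp_lt_iff.mpr (this.1 (by omega))
    · intro hpar
      exact rfp_lt_iff.mpr (this.2 (by omega))

/-- backward Zig transfer for the insertion -/
lemma zig_of_ins {s0 p0 : ℕ} (τ : Equiv.Perm (Fin M)) (hs : s0 ≤ M) (hp : p0 ≤ M)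
    (hpodd : p0 % 2 = 1) (hz' : Zig (ins τ s0 p0))
    (hpair : p0 + 1 ≤ M → posVal τ (p0 + 1) < posVal τ p0) : Zig τ := by
  intro i hi1 hiM
  rcases (show i + 1 ≤ p0 ∨ i = p0 ∨ p0 + 1 ≤ i by omega) with hc | hc | hc
  · have := hz' i hi1 (by omega)
    rw [ins_w_lt τ hs hp (by omega : i ≤ p0), ins_w_lt τ hs hp (by omega : i + 1 ≤ p0)] at this
    constructor
    · intro hpar
      exact rfp_lt_iff.mp (this.1 hpar)
    · intro hpar
      exact rfp_lt_iff.mp (this.2 hpar)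
  · subst hc
    constructor
    · intro _; exact hpair hiM
    · intro hpar; omega
  · have := hz' (i + 2) (by omega) (by omega)
    rw [ins_w_gt τ hs hp (by omega : p0 + 3 ≤ i + 2),
      ins_w_gt τ hs hp (by omega : p0 + 3 ≤ i + 2 + 1)] at this
    have e1 : i + 2 - 2 = i := by omega
    have e2 : i + 2 + 1 - 2 = i + 1 := by omega
    rw [e1, e2] at this
    constructor
    · intro hpar
      exact rfp_lt_iff.mp (this.1 (by omega))
    · intro hpar
      exact rfp_lt_iff.mp (this.2 (by omega))

lemma ins_inj {s0 p0 : ℕ} (hs : s0 ≤ M) (hp : p0 ≤ M) {τ τ' : Equiv.Perm (Fin M)}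
    (h : ins τ s0 p0 = ins τ' s0 p0) : τ = τ' := by
  apply perm_ext_posVal
  intro j
  rcases (show j ≤ p0 ∨ p0 + 1 ≤ j by omega) with hc | hc
  · have h1 := ins_w_lt τ hs hp hc
    have h2 := ins_w_lt τ' hs hp hc
    rw [h] at h1
    exact rfp_inj (h1.symm.trans h2)
  · have h1 := ins_w_gt τ hs hp (show p0 + 3 ≤ j + 2 by omega)
    have h2 := ins_w_gt τ' hs hp (show p0 + 3 ≤ j + 2 by omega)
    rw [h] at h1
    have e : j + 2 - 2 = j := by omega
    rw [e] at h1 h2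
    exact rfp_inj (h1.symm.trans h2)

/-- surjectivity: every permutation with prescribed values `s0+1`, `M+2` at positions
`p0+1`, `p0+2` is an insertion -/
lemma ins_surj {s0 p0 : ℕ} (σ : Equiv.Perm (Fin (M + 2))) (hs : s0 ≤ M) (hp : p0 ≤ M)
    (h1 : posVal σ (p0 + 1) = s0 + 1) (h2 : posVal σ (p0 + 2) = M + 2) :
    ∃ τ : Equiv.Perm (Fin M), σ = ins τ s0 p0 := by
  have ht1 : tv σ p0 = s0 := by
    have h := posVal_eq_tv σ (j := p0 + 1) (by omega) (by omega)
    rw [show p0 + 1 - 1 = p0 from rfl] at h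
    omega
  have ht2 : tv σ (p0 + 1) = M + 1 := by
    have h := posVal_eq_tv σ (j := p0 + 2) (by omega) (by omega)
    rw [show p0 + 2 - 1 = p0 + 1 from rfl] at h
    omega
  -- value at other positions avoids s0 and M+1
  have hval : ∀ x, x < M → (tv σ (if x < p0 then x else x + 2) ≠ s0 ∧
      tv σ (if x < p0 then x else x + 2) ≠ M + 1 ∧ tv σ (if x < p0 then x else x + 2) < M + 2) := by
    intro x hx
    set q := if x < p0 then x else x + 2 with hq
    have hqlt : q < M + 2 := by rw [hq]; split_ifs <;> omega
    have hqne1 : q ≠ p0 := by rw [hq]; split_ifs <;> omega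
    have hqne2 : q ≠ p0 + 1 := by rw [hq]; split_ifs <;> omega
    refine ⟨?_, ?_, tv_lt σ hqlt⟩
    · intro hc
      exact hqne1 (tv_inj σ hqlt (by omega) (hc.trans ht1.symm))
    · intro hc
      exact hqne2 (tv_inj σ hqlt (by omega) (hc.trans ht2.symm))
  have hgb : ∀ x, x < M →
      (if tv σ (if x < p0 then x else x + 2) < s0 then tv σ (if x < p0 then x else x + 2)
        else tv σ (if x < p0 then x else x + 2) - 1) < M := by
    intro x hx
    have h := hval x hx
    revert h
    split_ifs <;> omega
  set g : Fin M → Fin M := fun i =>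
    ⟨if tv σ (if (i : ℕ) < p0 then (i : ℕ) else (i : ℕ) + 2) < s0
        then tv σ (if (i : ℕ) < p0 then (i : ℕ) else (i : ℕ) + 2)
        else tv σ (if (i : ℕ) < p0 then (i : ℕ) else (i : ℕ) + 2) - 1,
      hgb i i.isLt⟩ with hgdef
  have hginj : Function.Injective g := by
    intro a b hab
    have hab' := congrArg Fin.val hab
    rw [hgdef] at hab'
    simp only at hab'
    have hva := hval a a.isLt
    have hvb := hval b b.isLt
    have hq : (if (a : ℕ) < p0 then (a : ℕ) else (a : ℕ) + 2) =
        (if (b : ℕ) < p0 then (b : ℕ) else (b : ℕ) + 2) → a = b := by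
      intro hc
      apply Fin.val_injective
      revert hc
      split_ifs <;> omega
    apply hq
    apply tv_inj σ (by split_ifs <;> [omega; (have := a.isLt; omega)])
      (by split_ifs <;> [omega; (have := b.isLt; omega)])
    revert hab' hva hvb
    split_ifs <;> omega
  set τ : Equiv.Perm (Fin M) := Equiv.ofBijective g (Finite.injective_iff_bijective.mp hginj)
    with hτdef
  have htv : ∀ x, x < M → tv τ x =
      (if tv σ (if x < p0 then x else x + 2) < s0 then tv σ (if x < p0 then x else x + 2)
        else tv σ (if x < p0 then x else x + 2) - 1) := by
    intro x hx
    unfold tv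
    rw [dif_pos hx]
    rfl
  refine ⟨τ, ?_⟩
  have key : ins τ s0 p0 = σ := by
    apply perm_ext_posVal
    intro j
    rcases (show j ≤ p0 ∨ j = p0 + 1 ∨ j = p0 + 2 ∨ (p0 + 3 ≤ j ∧ j ≤ M + 2) ∨ M + 2 < j by omega)
      with hc | hc | hc | hc | hc
    · rw [ins_w_lt τ hs hp hc]
      by_cases hj0 : 1 ≤ j
      · have hσj : posVal σ j = tv σ (j - 1) + 1 := posVal_eq_tv σ hj0 (by omega)
        have hτj : posVal τ j = tv τ (j - 1) + 1 := posVal_eq_tv τ hj0 (by omega)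
        rw [hτj, htv (j - 1) (by omega), hσj]
        have := hval (j - 1) (by omega)
        rw [if_pos (by omega : j - 1 < p0)] at this ⊢
        unfold rfp
        split_ifs <;> omega
      · have : j = 0 := by omega
        subst this
        rw [posVal_of_out _ (by omega), posVal_of_out _ (by omega)]
        unfold rfp
        rw [if_pos (by omega)]
    · subst hc
      rw [ins_w_s τ hs hp, h1]
    · subst hc
      rw [ins_w_max τ hs hp, h2]
    · obtain ⟨hc1, hc2⟩ := hc
      rw [ins_w_gt τ hs hp hc1]
      have hσj : posVal σ j = tv σ (j - 1) + 1 := posVal_eq_tv σ (by omega) (by omega)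
      have hτj : posVal τ (j - 2) = tv τ (j - 3) + 1 := posVal_eq_tv τ (by omega) (by omega)
      rw [hτj, htv (j - 3) (by omega), hσj]
      have := hval (j - 3) (by omega)
      rw [if_neg (by omega : ¬(j - 3 < p0))] at this ⊢
      have e : j - 3 + 2 = j - 1 := by omega
      rw [e] at this ⊢
      unfold rfp
      split_ifs <;> omega
    · rw [ins_w_gt τ hs hp (by omega), posVal_of_out τ (by omega),
        posVal_of_out σ (by omega)]
      unfold rfp
      rw [if_pos (by omega)]
  exact key.symm

end Stmt5


namespace Stmt5

open Equiv

variable {N : ℕ}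

def APsetL (N k : ℕ) : Set (Equiv.Perm (Fin N)) := {σ | Zig σ ∧
  posVal σ (mp1 σ - 1) = k ∧ posVal σ (mp1 σ + 1) = k - 1}

def APsetR (N k : ℕ) : Set (Equiv.Perm (Fin N)) := {σ | Zig σ ∧
  posVal σ (mp1 σ - 1) = k - 1 ∧ posVal σ (mp1 σ + 1) = k}

def BsetL (N k : ℕ) : Set (Equiv.Perm (Fin N)) := {σ | Zig σ ∧ grn σ = k ∧
  posVal σ (mp1 σ - 1) = k ∧ posVal σ (mp1 σ - 2) = k + 1}

def BsetR (N k : ℕ) : Set (Equiv.Perm (Fin N)) := {σ | Zig σ ∧ grn σ = k ∧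
  posVal σ (mp1 σ + 1) = k ∧ posVal σ (mp1 σ + 2) = k + 1}

def Wset (N k : ℕ) : Set (Equiv.Perm (Fin N)) := {σ | Zig σ ∧ pos1 σ k % 2 = 1}

def ZigSet (N : ℕ) : Set (Equiv.Perm (Fin N)) := {σ | Zig σ}

lemma APset_eq_union {k : ℕ} (hk : 1 ≤ k) :
    APset N k = APsetL N k ∪ APsetR N k := by
  ext σ
  constructor
  · rintro ⟨hz, h | h⟩
    · exact Or.inl ⟨hz, h.1, h.2⟩
    · exact Or.inr ⟨hz, h.1, h.2⟩
  · rintro (⟨hz, h1, h2⟩ | ⟨hz, h1, h2⟩)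
    · exact ⟨hz, Or.inl ⟨h1, h2⟩⟩
    · exact ⟨hz, Or.inr ⟨h1, h2⟩⟩

lemma Bset_eq_union {k : ℕ} :
    Bset N k = BsetL N k ∪ BsetR N k := by
  ext σ
  constructor
  · rintro ⟨hz, hg, h | h⟩
    · exact Or.inl ⟨hz, hg, h.1, h.2⟩
    · exact Or.inr ⟨hz, hg, h.1, h.2⟩
  · rintro (⟨hz, hg, h1, h2⟩ | ⟨hz, hg, h1, h2⟩)
    · exact ⟨hz, hg, Or.inl ⟨h1, h2⟩⟩
    · exact ⟨hz, hg, Or.inr ⟨h1, h2⟩⟩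

lemma APset_disjoint {k : ℕ} (hk : 1 ≤ k) :
    Disjoint (APsetL N k) (APsetR N k) := by
  rw [Set.disjoint_left]
  rintro σ ⟨hz, h1, h2⟩ ⟨hz', h1', h2'⟩
  omega

lemma Bset_disjoint {k : ℕ} (hk : 1 ≤ k) :
    Disjoint (BsetL N k) (BsetR N k) := by
  rw [Set.disjoint_left]
  rintro σ ⟨hz, hg, h1, h2⟩ ⟨hz', hg', h1', h2'⟩
  have hr1 : 1 ≤ mp1 σ - 2 ∧ mp1 σ - 2 ≤ N := (posVal_pos_iff σ).mp (by omega)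
  have hr2 : 1 ≤ mp1 σ + 2 ∧ mp1 σ + 2 ≤ N := (posVal_pos_iff σ).mp (by omega)
  have := posVal_inj σ hr1.1 hr1.2 hr2.1 hr2.2 (by rw [h2, h2'])
  omega

lemma apL_rv {k : ℕ} (hN : N % 2 = 1) {σ : Equiv.Perm (Fin N)} (h : σ ∈ APsetL N k) :
    rv σ ∈ APsetR N k := by
  obtain ⟨hz, h1, h2⟩ := h
  have h0 : 0 < N := by omega
  have hm := mp1_range σ h0
  refine ⟨zig_rv σ hN hz, ?_, ?_⟩
  · rw [mp1_rv σ h0, posVal_rv]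
    have e : N + 1 - (N + 1 - mp1 σ - 1) = mp1 σ + 1 := by omega
    rw [e, h2]
  · rw [mp1_rv σ h0, posVal_rv]
    have e : N + 1 - (N + 1 - mp1 σ + 1) = mp1 σ - 1 := by omega
    rw [e, h1]

lemma apR_rv {k : ℕ} (hN : N % 2 = 1) {σ : Equiv.Perm (Fin N)} (h : σ ∈ APsetR N k) :
    rv σ ∈ APsetL N k := by
  obtain ⟨hz, h1, h2⟩ := h
  have h0 : 0 < N := by omega
  have hm := mp1_range σ h0
  refine ⟨zig_rv σ hN hz, ?_, ?_⟩
  · rw [mp1_rv σ h0, posVal_rv]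
    have e : N + 1 - (N + 1 - mp1 σ - 1) = mp1 σ + 1 := by omega
    rw [e, h2]
  · rw [mp1_rv σ h0, posVal_rv]
    have e : N + 1 - (N + 1 - mp1 σ + 1) = mp1 σ - 1 := by omega
    rw [e, h1]

lemma bL_rv {k : ℕ} (hN : N % 2 = 1) {σ : Equiv.Perm (Fin N)} (h : σ ∈ BsetL N k) :
    rv σ ∈ BsetR N k := by
  obtain ⟨hz, hg, h1, h2⟩ := h
  have h0 : 0 < N := by omega
  have hm := mp1_range σ h0
  have hr2 : 1 ≤ mp1 σ - 2 ∧ mp1 σ - 2 ≤ N := (posVal_pos_iff σ).mp (by omega)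
  refine ⟨zig_rv σ hN hz, by rw [grn_rv σ h0]; exact hg, ?_, ?_⟩
  · rw [mp1_rv σ h0, posVal_rv]
    have e : N + 1 - (N + 1 - mp1 σ + 1) = mp1 σ - 1 := by omega
    rw [e, h1]
  · rw [mp1_rv σ h0, posVal_rv]
    have e : N + 1 - (N + 1 - mp1 σ + 2) = mp1 σ - 2 := by omega
    rw [e, h2]

lemma bR_rv {k : ℕ} (hN : N % 2 = 1) {σ : Equiv.Perm (Fin N)} (h : σ ∈ BsetR N k) :
    rv σ ∈ BsetL N k := by
  obtain ⟨hz, hg, h1, h2⟩ := h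
  have h0 : 0 < N := by omega
  have hm := mp1_range σ h0
  have hr2 : 1 ≤ mp1 σ + 2 ∧ mp1 σ + 2 ≤ N := (posVal_pos_iff σ).mp (by omega)
  refine ⟨zig_rv σ hN hz, by rw [grn_rv σ h0]; exact hg, ?_, ?_⟩
  · rw [mp1_rv σ h0, posVal_rv]
    have e : N + 1 - (N + 1 - mp1 σ - 1) = mp1 σ + 1 := by omega
    rw [e, h1]
  · rw [mp1_rv σ h0, posVal_rv]
    have e : N + 1 - (N + 1 - mp1 σ - 2) = mp1 σ + 2 := by omega
    rw [e, h2]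

lemma card_apL_eq_apR {k : ℕ} (hN : N % 2 = 1) :
    Nat.card (APsetL N k) = Nat.card (APsetR N k) :=
  Nat.card_congr
    { toFun := fun σ => ⟨rv σ.1, apL_rv hN σ.2⟩
      invFun := fun σ => ⟨rv σ.1, apR_rv hN σ.2⟩
      left_inv := fun σ => Subtype.ext (rv_rv σ.1)
      right_inv := fun σ => Subtype.ext (rv_rv σ.1) }

lemma card_bL_eq_bR {k : ℕ} (hN : N % 2 = 1) :
    Nat.card (BsetL N k) = Nat.card (BsetR N k) :=
  Nat.card_congr
    { toFun := fun σ => ⟨rv σ.1, bL_rv hN σ.2⟩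
      invFun := fun σ => ⟨rv σ.1, bR_rv hN σ.2⟩
      left_inv := fun σ => Subtype.ext (rv_rv σ.1)
      right_inv := fun σ => Subtype.ext (rv_rv σ.1) }

lemma card_APset_eq {k : ℕ} (hN : N % 2 = 1) (hk : 1 ≤ k) :
    Nat.card (APset N k) = 2 * Nat.card (APsetL N k) := by
  rw [APset_eq_union hk, Nat.card_coe_set_eq,
    Set.ncard_union_eq (APset_disjoint hk) (Set.toFinite _) (Set.toFinite _),
    ← Nat.card_coe_set_eq, ← Nat.card_coe_set_eq, card_apL_eq_apR hN]
  omega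

lemma card_Bset_eq {k : ℕ} (hN : N % 2 = 1) (hk : 1 ≤ k) :
    Nat.card (Bset N k) = 2 * Nat.card (BsetL N k) := by
  rw [Bset_eq_union, Nat.card_coe_set_eq,
    Set.ncard_union_eq (Bset_disjoint hk) (Set.toFinite _) (Set.toFinite _),
    ← Nat.card_coe_set_eq, ← Nat.card_coe_set_eq, card_bL_eq_bR hN]
  omega

end Stmt5


namespace Stmt5

open Equiv

variable {M : ℕ} {k : ℕ}

lemma rfp_eq_self {s v : ℕ} (h : v < s) : rfp s v = v := by unfold rfp; rw [if_pos h]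

lemma rfp_eq_succ {s v : ℕ} (h : s ≤ v) : rfp s v = v + 1 := by unfold rfp; rw [if_neg (by omega)]

lemma bIns_mem (hM : M % 2 = 1) (hk1 : 1 ≤ k) (hk2 : k ≤ M)
    {τ : Equiv.Perm (Fin M)} (hτ : τ ∈ Wset M k) :
    ins τ (k - 1) (pos1 τ k) ∈ BsetL (M + 2) k := by
  obtain ⟨hz, hodd⟩ := hτ
  have hqr := pos1_range τ hk1 hk2
  set q := pos1 τ k with hqdef
  have hwq : posVal τ q = k := posVal_pos1 τ hk1 hk2
  have hs : k - 1 ≤ M := by omega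
  have hp : q ≤ M := hqr.2
  have hs1 : k - 1 + 1 = k := by omega
  have hw1 : posVal (ins τ (k - 1) q) (q + 1) = k := by
    rw [ins_w_s τ hs hp]; omega
  have hw2 : posVal (ins τ (k - 1) q) (q + 2) = M + 2 := ins_w_max τ hs hp
  have hw0 : posVal (ins τ (k - 1) q) q = k + 1 := by
    rw [ins_w_lt τ hs hp (le_refl q), hwq, hs1, rfp_eq_succ (le_refl k)]
  have hlt : posVal τ (q + 1) < k := by
    by_cases hc : q + 1 ≤ M
    · have := (hz q (by omega) hc).1 hodd
      omega
    · rw [posVal_of_out τ (by omega)]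
      omega
  have hw3 : posVal (ins τ (k - 1) q) (q + 3) < k := by
    rw [ins_w_gt τ hs hp (by omega)]
    have e : q + 3 - 2 = q + 1 := by omega
    rw [e, hs1, rfp_eq_self hlt]
    exact hlt
  have hzig : Zig (ins τ (k - 1) q) := by
    apply zig_ins τ hz hs hp hodd
    rw [hwq, hs1, rfp_eq_succ (le_refl k)]
    omega
  have hmp : mp1 (ins τ (k - 1) q) = q + 2 := mp1_ins τ hs hp
  refine ⟨hzig, ?_, ?_, ?_⟩
  · rw [grn_eq _ (by omega), hmp]
    have e1 : q + 2 - 1 = q + 1 := by omega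
    rw [e1, hw1, show q + 2 + 1 = q + 3 from rfl]
    omega
  · rw [hmp]
    have e1 : q + 2 - 1 = q + 1 := by omega
    rw [e1, hw1]
  · rw [hmp]
    have e1 : q + 2 - 2 = q := by omega
    rw [e1, hw0]

lemma bIns_surj (hM : M % 2 = 1) (hk1 : 1 ≤ k) (hk2 : k ≤ M)
    {σ : Equiv.Perm (Fin (M + 2))} (hσ : σ ∈ BsetL (M + 2) k) :
    ∃ τ ∈ Wset M k, ins τ (k - 1) (pos1 τ k) = σ := by
  obtain ⟨hz, hg, h1, h2⟩ := hσ
  have h0 : 0 < M + 2 := by omega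
  have hm := mp1_range σ h0
  have hmodd := mp1_odd σ hz (by omega)
  have hmax := posVal_mp1 σ h0
  have hr1 : 1 ≤ mp1 σ - 1 ∧ mp1 σ - 1 ≤ M + 2 := (posVal_pos_iff σ).mp (by omega)
  have hr2 : 1 ≤ mp1 σ - 2 ∧ mp1 σ - 2 ≤ M + 2 := (posVal_pos_iff σ).mp (by omega)
  have hm3 : 3 ≤ mp1 σ := by omega
  have hs : k - 1 ≤ M := by omega
  have hp : mp1 σ - 2 ≤ M := by omega
  have hs1 : k - 1 + 1 = k := by omega
  obtain ⟨τ, hins⟩ := ins_surj σ hs hp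
    (by rw [show mp1 σ - 2 + 1 = mp1 σ - 1 by omega]; omega)
    (by rw [show mp1 σ - 2 + 2 = mp1 σ by omega]; exact hmax)
  -- value facts about τ
  have f1 : posVal τ (mp1 σ - 2) = k := by
    have := ins_w_lt τ hs hp (le_refl (mp1 σ - 2))
    rw [← hins] at this
    rw [h2, hs1] at this
    have h' : rfp k k = k + 1 := rfp_eq_succ (le_refl k)
    exact (rfp_inj (h'.trans this)).symm
  -- the other neighbor of the max is < k
  have hother : posVal σ (mp1 σ + 1) < k := by
    rw [grn_eq σ h0, h1] at hg
    have hne : posVal σ (mp1 σ + 1) ≠ k := by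
      intro hc
      by_cases hin : 1 ≤ mp1 σ + 1 ∧ mp1 σ + 1 ≤ M + 2
      · have := posVal_inj σ hr1.1 hr1.2 hin.1 hin.2 (by rw [h1, hc])
        omega
      · rw [posVal_of_out σ hin] at hc
        omega
    omega
  have f2 : posVal τ (mp1 σ - 1) < k := by
    have := ins_w_gt τ hs hp (show mp1 σ - 2 + 3 ≤ mp1 σ + 1 by omega)
    rw [← hins] at this
    rw [show mp1 σ + 1 - 2 = mp1 σ - 1 by omega, hs1] at this
    by_cases hc : posVal τ (mp1 σ - 1) < k
    · exact hc
    · exfalso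
      rw [rfp_eq_succ (by omega)] at this
      omega
  have hzτ : Zig τ := by
    apply zig_of_ins τ hs hp (by omega) (by rw [← hins]; exact hz)
    intro _
    rw [show mp1 σ - 2 + 1 = mp1 σ - 1 by omega]
    omega
  have hpos : pos1 τ k = mp1 σ - 2 := by
    rw [pos1_eq_iff τ hk1 (by omega) (by omega) (by omega)]
    exact f1
  exact ⟨τ, ⟨hzτ, by rw [hpos]; omega⟩, by rw [hpos]; exact hins.symm⟩

lemma card_BsetL_eq_Wset (hM : M % 2 = 1) (hk1 : 1 ≤ k) (hk2 : k ≤ M) :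
    Nat.card (BsetL (M + 2) k) = Nat.card (Wset M k) := by
  symm
  apply Nat.card_congr
  apply Equiv.ofBijective (f := fun τ : Wset M k =>
    (⟨ins τ.1 (k - 1) (pos1 τ.1 k), bIns_mem hM hk1 hk2 τ.2⟩ : BsetL (M + 2) k))
  constructor
  · rintro ⟨τ, hτ⟩ ⟨τ', hτ'⟩ he
    have he' := congrArg Subtype.val he
    simp only at he'
    have hq : pos1 τ k = pos1 τ' k := by
      have e1 := mp1_ins τ (show k - 1 ≤ M by omega) (pos1_range τ hk1 hk2).2
      have e2 := mp1_ins τ' (show k - 1 ≤ M by omega) (pos1_range τ' hk1 hk2).2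
      rw [← he'] at e2
      omega
    apply Subtype.ext
    rw [hq] at he'
    exact ins_inj (show k - 1 ≤ M by omega) (pos1_range τ' hk1 hk2).2 he'
  · rintro ⟨σ, hσ⟩
    obtain ⟨τ, hτ, hins⟩ := bIns_surj hM hk1 hk2 hσ
    exact ⟨⟨τ, hτ⟩, Subtype.ext hins⟩

end Stmt5


namespace Stmt5

open Equiv

variable {M : ℕ} {k : ℕ}

lemma aIns_mem (hM : M % 2 = 1) (hk1 : 2 ≤ k) (hk2 : k ≤ M + 1)
    {τ : Equiv.Perm (Fin M)} (hτ : τ ∈ Vset M (k - 1)) :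
    ins τ (k - 2) (pos1 τ (k - 1) - 1) ∈ APsetR (M + 2) k := by
  obtain ⟨hz, heven⟩ := hτ
  have hqr := pos1_range τ (v := k - 1) (by omega) (by omega)
  set q := pos1 τ (k - 1) with hqdef
  have hq2 : 2 ≤ q := by omega
  have hwq : posVal τ q = k - 1 := posVal_pos1 τ (by omega) (by omega)
  have hs : k - 2 ≤ M := by omega
  have hp : q - 1 ≤ M := by omega
  have hpodd : (q - 1) % 2 = 1 := by omega
  have hs1 : k - 2 + 1 = k - 1 := by omega
  -- left neighbor of the marked value is above it
  have hln : k ≤ posVal τ (q - 1) := by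
    have := (hz (q - 1) (by omega) (by omega)).1 (by omega)
    rw [show q - 1 + 1 = q by omega, hwq] at this
    omega
  have hzig : Zig (ins τ (k - 2) (q - 1)) := by
    apply zig_ins τ hz hs hp hpodd
    rw [hs1, rfp_eq_succ (by omega)]
    omega
  have hmp : mp1 (ins τ (k - 2) (q - 1)) = q + 1 := by
    have := mp1_ins τ hs hp
    rw [show q - 1 + 2 = q + 1 by omega] at this
    exact this
  have hw1 : posVal (ins τ (k - 2) (q - 1)) q = k - 1 := by
    have := ins_w_s τ hs hp
    rw [show q - 1 + 1 = q by omega, hs1] at this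
    exact this
  have hw2 : posVal (ins τ (k - 2) (q - 1)) (q + 2) = k := by
    have := ins_w_gt τ hs hp (show q - 1 + 3 ≤ q + 2 by omega)
    rw [show q + 2 - 2 = q by omega, hwq, hs1, rfp_eq_succ (le_refl _)] at this
    rw [this]
    omega
  refine ⟨hzig, ?_, ?_⟩
  · rw [hmp, show q + 1 - 1 = q by omega, hw1]
  · rw [hmp, show q + 1 + 1 = q + 2 from rfl, hw2]

lemma aIns_surj (hM : M % 2 = 1) (hk1 : 2 ≤ k) (hk2 : k ≤ M + 1)
    {σ : Equiv.Perm (Fin (M + 2))} (hσ : σ ∈ APsetR (M + 2) k) :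
    ∃ τ ∈ Vset M (k - 1), ins τ (k - 2) (pos1 τ (k - 1) - 1) = σ := by
  obtain ⟨hz, h1, h2⟩ := hσ
  have h0 : 0 < M + 2 := by omega
  have hm := mp1_range σ h0
  have hmodd := mp1_odd σ hz (by omega)
  have hmax := posVal_mp1 σ h0
  have hr1 : 1 ≤ mp1 σ - 1 ∧ mp1 σ - 1 ≤ M + 2 := (posVal_pos_iff σ).mp (by omega)
  have hr2 : 1 ≤ mp1 σ + 1 ∧ mp1 σ + 1 ≤ M + 2 := (posVal_pos_iff σ).mp (by omega)
  have hm3 : 3 ≤ mp1 σ := by omega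
  have hs : k - 2 ≤ M := by omega
  have hp : mp1 σ - 2 ≤ M := by omega
  have hs1 : k - 2 + 1 = k - 1 := by omega
  obtain ⟨τ, hins⟩ := ins_surj σ hs hp
    (by rw [show mp1 σ - 2 + 1 = mp1 σ - 1 by omega]; omega)
    (by rw [show mp1 σ - 2 + 2 = mp1 σ by omega]; exact hmax)
  have f1 : posVal τ (mp1 σ - 1) = k - 1 := by
    have := ins_w_gt τ hs hp (show mp1 σ - 2 + 3 ≤ mp1 σ + 1 by omega)
    rw [← hins, show mp1 σ + 1 - 2 = mp1 σ - 1 by omega, hs1, h2] at this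
    have h' : rfp (k - 1) (k - 1) = k := by rw [rfp_eq_succ (le_refl _)]; omega
    exact (rfp_inj (h'.trans this)).symm
  -- value just left of the block in σ is ≥ k+1
  have hb : k + 1 ≤ posVal σ (mp1 σ - 2) := by
    have hzz := (hz (mp1 σ - 2) (by omega) (by omega)).1 (by omega)
    rw [show mp1 σ - 2 + 1 = mp1 σ - 1 by omega, h1] at hzz
    have hne : posVal σ (mp1 σ - 2) ≠ k := by
      intro hc
      have hrr : 1 ≤ mp1 σ - 2 ∧ mp1 σ - 2 ≤ M + 2 := (posVal_pos_iff σ).mp (by omega)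
      have := posVal_inj σ hrr.1 hrr.2 hr2.1 hr2.2 (by rw [hc, h2])
      omega
    omega
  have f2 : k ≤ posVal τ (mp1 σ - 2) := by
    have := ins_w_lt τ hs hp (le_refl (mp1 σ - 2))
    rw [← hins, hs1] at this
    by_cases hc : posVal τ (mp1 σ - 2) < k - 1
    · rw [rfp_eq_self hc] at this; omega
    · rw [rfp_eq_succ (by omega)] at this; omega
  have hzτ : Zig τ := by
    apply zig_of_ins τ hs hp (by omega) (by rw [← hins]; exact hz)
    intro _
    rw [show mp1 σ - 2 + 1 = mp1 σ - 1 by omega]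
    omega
  have hpos : pos1 τ (k - 1) = mp1 σ - 1 := by
    rw [pos1_eq_iff τ (by omega) (by omega) (by omega) (by omega)]
    exact f1
  exact ⟨τ, ⟨hzτ, by rw [hpos]; omega⟩,
    by rw [hpos, show mp1 σ - 1 - 1 = mp1 σ - 2 by omega]; exact hins.symm⟩

lemma card_APsetR_eq_Vset (hM : M % 2 = 1) (hk1 : 2 ≤ k) (hk2 : k ≤ M + 1) :
    Nat.card (APsetR (M + 2) k) = Nat.card (Vset M (k - 1)) := by
  symm
  apply Nat.card_congr
  apply Equiv.ofBijective (f := fun τ : Vset M (k - 1) =>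
    (⟨ins τ.1 (k - 2) (pos1 τ.1 (k - 1) - 1), aIns_mem hM hk1 hk2 τ.2⟩ : APsetR (M + 2) k))
  constructor
  · rintro ⟨τ, hτ⟩ ⟨τ', hτ'⟩ he
    have he' := congrArg Subtype.val he
    simp only at he'
    have hb1 := (pos1_range τ (v := k - 1) (by omega) (by omega))
    have hb2 := (pos1_range τ' (v := k - 1) (by omega) (by omega))
    have hq : pos1 τ (k - 1) = pos1 τ' (k - 1) := by
      have e1 := mp1_ins τ (show k - 2 ≤ M by omega) (show pos1 τ (k - 1) - 1 ≤ M by omega)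
      have e2 := mp1_ins τ' (show k - 2 ≤ M by omega) (show pos1 τ' (k - 1) - 1 ≤ M by omega)
      rw [← he'] at e2
      omega
    apply Subtype.ext
    rw [hq] at he'
    exact ins_inj (show k - 2 ≤ M by omega) (show pos1 τ' (k - 1) - 1 ≤ M by omega) he'
  · rintro ⟨σ, hσ⟩
    obtain ⟨τ, hτ, hins⟩ := aIns_surj hM hk1 hk2 hσ
    exact ⟨⟨τ, hτ⟩, Subtype.ext hins⟩

lemma a1Ins_mem (hM : M % 2 = 1) {τ : Equiv.Perm (Fin M)} (hτ : τ ∈ ZigSet M) :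
    ins τ 0 M ∈ APsetL (M + 2) 1 := by
  have hz := hτ
  have hs : (0 : ℕ) ≤ M := by omega
  have hp : M ≤ M := le_refl M
  have hzig : Zig (ins τ 0 M) := by
    apply zig_ins τ hz hs hp hM
    have h1 : 1 ≤ posVal τ M := posVal_pos τ (by omega) (le_refl M)
    rw [rfp_eq_succ (by omega)]
    omega
  have hmp : mp1 (ins τ 0 M) = M + 2 := mp1_ins τ hs hp
  refine ⟨hzig, ?_, ?_⟩
  · rw [hmp, show M + 2 - 1 = M + 1 by omega]
    exact ins_w_s τ hs hp
  · rw [hmp, posVal_of_out _ (by omega)]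

lemma a1Ins_surj (hM : M % 2 = 1) {σ : Equiv.Perm (Fin (M + 2))}
    (hσ : σ ∈ APsetL (M + 2) 1) : ∃ τ ∈ ZigSet M, ins τ 0 M = σ := by
  obtain ⟨hz, h1, h2⟩ := hσ
  have h0 : 0 < M + 2 := by omega
  have hm := mp1_range σ h0
  have hmax := posVal_mp1 σ h0
  have hmtop : mp1 σ = M + 2 := by
    by_contra hc
    have : 1 ≤ mp1 σ + 1 ∧ mp1 σ + 1 ≤ M + 2 := by omega
    have := posVal_pos σ this.1 this.2
    omega
  rw [hmtop] at hmax h1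
  rw [show M + 2 - 1 = M + 1 from rfl] at h1
  obtain ⟨τ, hins⟩ := ins_surj σ (show (0:ℕ) ≤ M by omega) (le_refl M)
    (by omega) hmax
  have hzτ : Zig τ := by
    apply zig_of_ins (s0 := 0) (p0 := M) τ (by omega) (le_refl M) hM
      (by rw [← hins]; exact hz)
    intro hc
    omega
  exact ⟨τ, hzτ, hins.symm⟩

lemma card_APsetL_one_eq (hM : M % 2 = 1) :
    Nat.card (APsetL (M + 2) 1) = Nat.card (ZigSet M) := by
  symm
  apply Nat.card_congr
  apply Equiv.ofBijective (f := fun τ : ZigSet M =>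
    (⟨ins τ.1 0 M, a1Ins_mem hM τ.2⟩ : APsetL (M + 2) 1))
  constructor
  · rintro ⟨τ, hτ⟩ ⟨τ', hτ'⟩ he
    have he' := congrArg Subtype.val he
    simp only at he'
    exact Subtype.ext (ins_inj (by omega) (le_refl M) he')
  · rintro ⟨σ, hσ⟩
    obtain ⟨τ, hτ, hins⟩ := a1Ins_surj hM hσ
    exact ⟨⟨τ, hτ⟩, Subtype.ext hins⟩

end Stmt5


namespace Stmt5

open Equiv

variable {N : ℕ}

lemma Xset_zero_empty (h2 : 2 ≤ N) : Xset N 0 = ∅ := by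
  ext σ
  simp only [Set.mem_empty_iff_false, iff_false]
  rintro ⟨hz, hg⟩
  have := grn_pos σ h2
  omega

lemma Xset_one_eq (h2 : 2 ≤ N) : Xset N 1 = APset N 1 := by
  apply Set.eq_of_subset_of_subset
  · rintro σ ⟨hz, hg⟩
    refine ⟨hz, ?_⟩
    rcases grn_cases (by omega) (le_refl 1) hg with ⟨h1, h2'⟩ | ⟨h1, h2'⟩
    · exact Or.inl ⟨h1, by omega⟩
    · exact Or.inr ⟨by omega, h1⟩
  · exact APset_subset_Xset (by omega) (le_refl 1)

lemma card_Xset_one_level1 : Nat.card (Xset 1 0) = 1 := by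
  have : Xset 1 0 = Set.univ := by
    ext σ
    simp only [Set.mem_univ, iff_true]
    constructor
    · intro j hj1 hj2; omega
    · rw [grn_eq σ (by omega)]
      have hm := mp1_range σ (by omega)
      have : mp1 σ = 1 := by omega
      rw [this, posVal_of_out σ (by omega), posVal_of_out σ (by omega)]
      simp
  rw [this]
  rw [Nat.card_congr (Equiv.Set.univ _)]
  exact Nat.card_unique

lemma card_Wset_one_level1 : Nat.card (Wset 1 1) = 1 := by
  have : Wset 1 1 = Set.univ := by
    ext σ
    simp only [Set.mem_univ, iff_true]
    constructor
    · intro j hj1 hj2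
      omega
    · have := pos1_range σ (v := 1) (le_refl 1) (le_refl 1)
      omega
  rw [this]
  rw [Nat.card_congr (Equiv.Set.univ _)]
  exact Nat.card_unique

lemma Wset_one_empty (h2 : 2 ≤ N) : Wset N 1 = ∅ := by
  ext σ
  simp only [Set.mem_empty_iff_false, iff_false]
  rintro ⟨hz, hodd⟩
  have hqr := pos1_range σ (v := 1) (by omega) (by omega)
  set q := pos1 σ 1 with hqdef
  have hq : posVal σ q = 1 := posVal_pos1 σ (by omega) (by omega)
  by_cases hc : q + 1 ≤ N
  · have := (hz q (by omega) hc).1 (by omega)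
    have := posVal_pos σ (j := q + 1) (by omega) (by omega)
    omega
  · have hqN : q = N := by omega
    have h' := (hz (N - 1) (by omega) (by omega)).2 (by omega)
    rw [show N - 1 + 1 = N by omega] at h'
    rw [hqN] at hq
    have := posVal_pos σ (j := N - 1) (by omega) (by omega)
    omega

lemma card_Wset_one_eq_Xset_zero (hN : N % 2 = 1) :
    Nat.card (Wset N 1) = Nat.card (Xset N 0) := by
  rcases (show N = 1 ∨ 2 ≤ N by omega) with rfl | h2
  · rw [card_Wset_one_level1, card_Xset_one_level1]
  · rw [Wset_one_empty h2, Xset_zero_empty h2]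

lemma Vset_N_empty (hN : N % 2 = 1) : Vset N N = ∅ := by
  ext σ
  simp only [Set.mem_empty_iff_false, iff_false]
  rintro ⟨hz, heven⟩
  have := mp1_odd σ hz hN
  rw [← mp1_eq_pos1 σ (by omega)] at heven
  omega

lemma card_V_add_W {j : ℕ} (hj1 : 1 ≤ j) (hj2 : j ≤ N) :
    Nat.card (Vset N j) + Nat.card (Wset N j) = Nat.card (ZigSet N) := by
  rw [Nat.card_coe_set_eq, Nat.card_coe_set_eq, Nat.card_coe_set_eq]
  rw [← Set.ncard_union_eq ?disj (Set.toFinite _) (Set.toFinite _)]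
  case disj =>
    rw [Set.disjoint_left]
    rintro σ ⟨_, h1⟩ ⟨_, h2⟩
    omega
  congr 1
  apply Set.eq_of_subset_of_subset
  · rintro σ (⟨hz, _⟩ | ⟨hz, _⟩) <;> exact hz
  · intro σ hz
    have := pos1_range σ hj1 hj2
    rcases Nat.even_or_odd (pos1 σ j) with he | ho
    · exact Or.inl ⟨hz, by rwa [Nat.even_iff] at he⟩
    · exact Or.inr ⟨hz, by rwa [Nat.odd_iff] at ho⟩

lemma V_step {j : ℕ} (hN : N % 2 = 1) (hj1 : 1 ≤ j) (hj2 : j + 1 ≤ N) :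
    Nat.card (Vset N j) = Nat.card (Vset N (j + 1)) + Nat.card (Xset N j) := by
  rw [card_Vset_succ hj1 hj2, card_Xset_eq_card_Cset hN hj1 hj2]

/-- partition of ZigSet by grn values -/
lemma card_zig_partial (N : ℕ) :
    ∀ m : ℕ, ({σ : Equiv.Perm (Fin N) | Zig σ ∧ grn σ < m}).ncard =
      ∑ j ∈ Finset.range m, (Xset N j).ncard := by
  intro m
  induction m with
  | zero =>
    simp only [Finset.range_zero, Finset.sum_empty]
    have he : ({σ : Equiv.Perm (Fin N) | Zig σ ∧ grn σ < 0}) = ∅ := by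
      ext σ
      simp only [Set.mem_setOf_eq, Set.mem_empty_iff_false, iff_false]
      rintro ⟨_, h⟩
      omega
    rw [he, Set.ncard_empty]
  | succ m ih =>
    rw [Finset.sum_range_succ, ← ih]
    rw [← Set.ncard_union_eq ?disj (Set.toFinite _) (Set.toFinite _)]
    case disj =>
      rw [Set.disjoint_left]
      rintro σ ⟨_, h1⟩ ⟨_, h2⟩
      omega
    congr 1
    ext σ
    constructor
    · rintro ⟨hz, hg⟩
      rcases (show grn σ < m ∨ grn σ = m by omega) with hc | hc
      · exact Or.inl ⟨hz, hc⟩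
      · exact Or.inr ⟨hz, hc⟩
    · rintro (⟨hz, hg⟩ | ⟨hz, hg⟩)
      · exact ⟨hz, by omega⟩
      · exact ⟨hz, by omega⟩

lemma card_zig_sum (h0 : 0 < N) :
    Nat.card (ZigSet N) = ∑ j ∈ Finset.range N, Nat.card (Xset N j) := by
  have := card_zig_partial N N
  have he : ({σ : Equiv.Perm (Fin N) | Zig σ ∧ grn σ < N}) = ZigSet N := by
    ext σ
    constructor
    · rintro ⟨hz, _⟩; exact hz
    · intro hz
      have := grn_le σ h0
      exact ⟨hz, by omega⟩
  rw [he] at this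
  rw [Nat.card_coe_set_eq, this]
  apply Finset.sum_congr rfl
  intro j _
  rw [Nat.card_coe_set_eq]

/-- the master counting identity -/
lemma master {M k : ℕ} (hM : M % 2 = 1) (hk1 : 1 ≤ k) (hk2 : k ≤ M) :
    Nat.card (Xset (M + 2) (k + 1)) + Nat.card (Xset (M + 2) (k - 1)) +
      4 * Nat.card (Xset M (k - 1)) = 2 * Nat.card (Xset (M + 2) k) := by
  have hN : (M + 2) % 2 = 1 := by omega
  have e1 := l1 (N := M + 2) hN hk1 (by omega)
  have e3 : Nat.card (APset (M + 2) (k + 1)) = 2 * Nat.card (Vset M k) := by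
    rw [card_APset_eq hN (by omega), card_apL_eq_apR hN,
      card_APsetR_eq_Vset hM (by omega) (by omega)]
    congr 1
  have e5 : Nat.card (Bset (M + 2) k) = 2 * Nat.card (Wset M k) := by
    rw [card_Bset_eq hN (by omega), card_BsetL_eq_Wset hM hk1 hk2]
  have e7 := card_V_add_W (N := M) (j := k) hk1 hk2
  rcases (show k = 1 ∨ 2 ≤ k by omega) with rfl | hk2'
  · -- k = 1 case
    have e4 : Nat.card (Xset (M + 2) 1) = Nat.card (APset (M + 2) 1) := by
      rw [Xset_one_eq (by omega)]
    have e5' : Nat.card (APset (M + 2) 1) = 2 * Nat.card (ZigSet M) := by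
      rw [card_APset_eq hN (by omega), card_APsetL_one_eq hM]
    have e7' := card_Wset_one_eq_Xset_zero (N := M) hM
    have e8 : Nat.card (Xset (M + 2) 0) = 0 := by
      rw [Xset_zero_empty (by omega)]
      simp
    rw [show (1:ℕ) - 1 = 0 from rfl]
    omega
  · -- k ≥ 2 case
    have e2 := l1 (N := M + 2) hN (show 1 ≤ k - 1 by omega) (by omega)
    rw [show k - 1 + 1 = k by omega] at e2
    have e4 : Nat.card (APset (M + 2) k) = 2 * Nat.card (Vset M (k - 1)) := by
      rw [card_APset_eq hN (by omega), card_apL_eq_apR hN,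
        card_APsetR_eq_Vset hM (by omega) (by omega)]
    have e6 : Nat.card (Bset (M + 2) (k - 1)) = 2 * Nat.card (Wset M (k - 1)) := by
      rw [card_Bset_eq hN (by omega), card_BsetL_eq_Wset hM (by omega) (by omega)]
    have e8 := card_V_add_W (N := M) (j := k - 1) (by omega) (by omega)
    have e9 : Nat.card (Vset M (k - 1)) = Nat.card (Vset M k) + Nat.card (Xset M (k - 1)) := by
      have := V_step (N := M) hM (j := k - 1) (by omega) (by omega)
      rw [show k - 1 + 1 = k by omega] at this
      exact this
    omega

end Stmt5

namespace Stmt5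

lemma altAk_eq_Xset (N k : ℕ) : altAk N k = Xset N k := by
  ext σ
  exact and_congr_left' (isAlternating_iff_zig σ)

lemma card_Xset_one_eq {M : ℕ} (hM : M % 2 = 1) :
    Nat.card (Xset (M + 2) 1) = 2 * Nat.card (ZigSet M) := by
  rw [Xset_one_eq (by omega), card_APset_eq (by omega) (le_refl 1), card_APsetL_one_eq hM]

lemma sum_shift (c : ℕ → ℚ) (M : ℕ) :
    ∑ k ∈ Finset.Icc 1 M, c (k - 1) = ∑ j ∈ Finset.range M, c j := by
  induction M with
  | zero => simp
  | succ m ih =>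
    rw [Finset.sum_range_succ, ← ih, show Finset.Icc 1 (m + 1) = insert (m + 1) (Finset.Icc 1 m) by
      ext x; simp [Finset.mem_Icc, Finset.mem_insert]; omega]
    rw [Finset.sum_insert (by simp [Finset.mem_Icc])]
    have e : m + 1 - 1 = m := by omega
    rw [e]
    ring

end Stmt5

open Stmt5

/-- the solution of (1.2) with initial conditions [tan1] counts
alternating permutations of odd length by the statistic grn. -/
theorem stmt5 (f : ℕ → ℕ → ℚ) (hFD : SatisfiesFD f) (hInit : Tan1 f) :
    ∀ n, 1 ≤ n → ∀ k, 1 ≤ k → k ≤ 2 * n - 1 →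
      f n k = Nat.card (altAk (2 * n - 1) (k - 1)) := by
  intro n
  induction n with
  | zero => omega
  | succ m ih =>
    intro _
    by_cases hm : m = 0
    · subst hm
      intro k hk1 hk2
      have hk : k = 1 := by omega
      subst hk
      rw [show 2 * (0 + 1) - 1 = 1 by omega, show (1 : ℕ) - 1 = 0 from rfl,
        altAk_eq_Xset, card_Xset_one_level1, hInit.1]
      norm_num
    · have hm1 : 1 ≤ m := by omega
      have IH := ih hm1
      set M : ℕ := 2 * m - 1 with hMdef
      have hM : M % 2 = 1 := by omega
      have hNeq : 2 * (m + 1) - 1 = M + 2 := by omega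
      have hn2 : 2 ≤ m + 1 := by omega
      -- f (m+1) 1 = 0
      have hf1 : f (m + 1) 1 = 0 := (hInit.2 (m + 1) hn2).1
      -- total count at level M
      have hb : ∀ k, 1 ≤ k → k ≤ M → f m k = (Nat.card (Xset M (k - 1)) : ℚ) := by
        intro k h1 h2
        rw [IH k h1 (by omega), altAk_eq_Xset]
      have hsum : ∑ k ∈ Finset.Icc 1 (2 * (m + 1) - 3), f m k =
          (Nat.card (ZigSet M) : ℚ) := by
        rw [show 2 * (m + 1) - 3 = M by omega]
        rw [show ∑ k ∈ Finset.Icc 1 M, f m k =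
            ∑ k ∈ Finset.Icc 1 M, ((Nat.card (Xset M (k - 1)) : ℚ)) from
          Finset.sum_congr rfl (fun k hk => by
            rw [Finset.mem_Icc] at hk
            exact hb k hk.1 hk.2)]
        rw [sum_shift (fun j => (Nat.card (Xset M j) : ℚ)) M]
        rw [card_zig_sum (by omega)]
        push_cast
        rfl
      have hf2 : f (m + 1) 2 = 2 * (Nat.card (ZigSet M) : ℚ) := by
        rw [(hInit.2 (m + 1) hn2).2, show m + 1 - 1 = m from rfl, hsum]
      -- the main induction on k
      have key : ∀ k, 1 ≤ k → k ≤ M + 2 →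
          f (m + 1) k = (Nat.card (Xset (M + 2) (k - 1)) : ℚ) := by
        intro k
        induction k using Nat.strong_induction_on with
        | _ k ihk =>
          intro hk1 hkN
          rcases (show k = 1 ∨ k = 2 ∨ 3 ≤ k by omega) with rfl | rfl | hk3
          · rw [hf1, show (1 : ℕ) - 1 = 0 from rfl, Xset_zero_empty (by omega)]
            simp
          · rw [hf2, show (2 : ℕ) - 1 = 1 from rfl, card_Xset_one_eq hM]
            push_cast
            ring
          · have hFDk := hFD (m + 1) hn2 (k - 2) (by omega) (by omega)
            rw [show k - 2 + 2 = k by omega, show k - 2 + 1 = k - 1 by omega,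
              show m + 1 - 1 = m from rfl] at hFDk
            have ih1 := ihk (k - 1) (by omega) (by omega) (by omega)
            rw [show k - 1 - 1 = k - 2 by omega] at ih1
            have ih2 := ihk (k - 2) (by omega) (by omega) (by omega)
            have ih3 : f m (k - 2) = (Nat.card (Xset M (k - 3)) : ℚ) := by
              rw [hb (k - 2) (by omega) (by omega), show k - 2 - 1 = k - 3 by omega]
            have hmast := master (M := M) (k := k - 2) hM (by omega) (by omega)
            rw [show k - 2 + 1 = k - 1 by omega, show k - 2 - 1 = k - 3 by omega] at hmast
            have hcast : (Nat.card (Xset (M + 2) (k - 1)) : ℚ) +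
                (Nat.card (Xset (M + 2) (k - 3)) : ℚ) +
                4 * (Nat.card (Xset M (k - 3)) : ℚ) =
                2 * (Nat.card (Xset (M + 2) (k - 2)) : ℚ) := by
              exact_mod_cast congrArg (fun x : ℕ => (x : ℚ)) hmast
            rw [show k - 2 - 1 = k - 3 by omega] at ih2
            linarith
      intro k hk1 hk2
      rw [hNeq, altAk_eq_Xset]
      exact key k hk1 (by omega)
end

section
/- Let (f_{2n})_{n≥1} be real numbers such that the even power series f(x) = 1 + Σ_{n≥1} f_{2n} x^{2n}/(2n)! has positive radius of convergence, and let Γ = (γ_{i,j})_{i,j≥0} be an infinite matrix of real numbers satisfying: γ_{i,j} = 2γ_{i−1,j−1} + (1/2)(γ_{i−1,j+1} + γ_{i+1,j−1}) for all i ≥ 1, j ≥ 1; γ_{i,j} = 0 whenever i + j is odd; γ_{0,0} = 1; γ_{2n+1,0} = γ_{0,2n+1} = 0 for n ≥ 0; and γ_{2n,0} = γ_{0,2n} = f_{2n} for n ≥ 1. Then, as formal power series in two variables, Σ_{i≥0, j≥0} γ_{i,j} x^i y^j/(i! j!) = f(x+y) · sec(x+y) · cos(x−y), where sec denotes the formal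 power series inverse of the cosine series. -/
open scoped BigOperators

/-- The formal power series of `cos`. -/
noncomputable def cosPS : PowerSeries ℝ :=
  PowerSeries.mk fun m => if Even m then (-1 : ℝ) ^ (m / 2) / Nat.factorial m else 0

/-- The even formal power series `f(x) = 1 + Σ_{n≥1} f_{2n} x^{2n}/(2n)!` attached to
the sequence `n ↦ f n` (where `f n` stands for `f_{2n}`). -/
noncomputable def evenPS (f : ℕ → ℝ) : PowerSeries ℝ :=
  PowerSeries.mk fun m =>
    if m = 0 then 1 else if m % 2 = 0 then f (m / 2) / Nat.factorial m else 0

/-- The two-variable formal power series `g(x + ε·y)` obtained by substituting `x + ε·y`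
into the one-variable series `g`: by the binomial theorem its coefficient of `x^i y^j`
is `g_{i+j} · C(i+j, i) · ε^j`. -/
noncomputable def substXY (g : PowerSeries ℝ) (ε : ℝ) : MvPowerSeries (Fin 2) ℝ :=
  fun d => (PowerSeries.coeff (d 0 + d 1) g) * (Nat.choose (d 0 + d 1) (d 0)) * ε ^ (d 1)

/-!
Write `P = f(x+y) · sec(x+y) · cos(x-y)`. The derivation `D = ∂/∂x - ∂/∂y` kills every series
in `x + y` and sends `cos(x-y)` to `-2 sin(x-y)`, so `D² P = -4 P`; on the coefficients
`i! j! [x^i y^j] P` this is exactly the recursion of `Γ`. Setting `y = 0` or `x = 0` turns `P`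
into `f · sec · cos = f`, so `P` also has the boundary values of `Γ`. Finally, a solution of the
recursion is determined by its boundary values: once the antidiagonals `i + j < s` are known,
the second difference along `i + j = s` vanishes, so the difference of two solutions is linear
there and vanishes at both ends.
-/

open scoped Nat PowerSeries

namespace MvPowerSeries

variable {σ R : Type*} [CommSemiring R]

noncomputable def restrictTo (i : σ) (P : MvPowerSeries σ R) : R⟦X⟧ :=
  PowerSeries.mk fun m => coeff (Finsupp.single i m) P

theorem coeff_restrictTo (i : σ) (P : MvPowerSeries σ R) (m : ℕ) :
    PowerSeries.coeff m (restrictTo i P) = coeff (Finsupp.single i m) P :=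
  PowerSeries.coeff_mk _ _

theorem restrictTo_mul [DecidableEq σ] (i : σ) (P Q : MvPowerSeries σ R) :
    restrictTo i (P * Q) = restrictTo i P * restrictTo i Q := by
  ext m
  rw [coeff_restrictTo, coeff_mul, Finsupp.antidiagonal_single, Finset.sum_map,
    PowerSeries.coeff_mul]
  simp [coeff_restrictTo]

end MvPowerSeries

theorem Derivation.map_mul_of_map_eq_zero {R A : Type*} [CommSemiring R] [CommSemiring A]
    [Algebra R A] (D : Derivation R A A) {a : A} (ha : D a = 0) (b : A) :
    D (a * b) = a * D b := by
  rw [D.leibniz, ha, smul_zero, add_zero, smul_eq_mul]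

open MvPowerSeries

section TwoVariables

variable {R : Type*} [CommSemiring R]

noncomputable def bidegree (i j : ℕ) : Fin 2 →₀ ℕ := Finsupp.single 0 i + Finsupp.single 1 j

theorem bidegree_apply_zero_apply_one (d : Fin 2 →₀ ℕ) : bidegree (d 0) (d 1) = d := by
  ext k
  fin_cases k <;> simp [bidegree]

@[simp]
theorem bidegree_apply_zero (i j : ℕ) : bidegree i j 0 = i := by
  simp [bidegree]

@[simp]
theorem bidegree_apply_one (i j : ℕ) : bidegree i j 1 = j := by
  simp [bidegree]

noncomputable def expCoeff₂ (P : MvPowerSeries (Fin 2) R) (i j : ℕ) : R :=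
  (i ! * j ! : R) * coeff (bidegree i j) P

theorem expCoeff₂_pderiv_zero (P : MvPowerSeries (Fin 2) R) (i j : ℕ) :
    expCoeff₂ (pderiv R 0 P) i j = expCoeff₂ P (i + 1) j := by
  have h : bidegree i j + Finsupp.single 0 1 = bidegree (i + 1) j := by
    simp only [bidegree, Finsupp.single_add]; abel
  rw [expCoeff₂, expCoeff₂, coeff_pderiv, h, bidegree_apply_zero, Nat.factorial_succ]
  push_cast
  ring

theorem expCoeff₂_pderiv_one (P : MvPowerSeries (Fin 2) R) (i j : ℕ) :
    expCoeff₂ (pderiv R 1 P) i j = expCoeff₂ P i (j + 1) := by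
  have h : bidegree i j + Finsupp.single 1 1 = bidegree i (j + 1) := by
    simp only [bidegree, Finsupp.single_add]; abel
  rw [expCoeff₂, expCoeff₂, coeff_pderiv, h, bidegree_apply_one, Nat.factorial_succ]
  push_cast
  ring

theorem expCoeff₂_zero_right (P : MvPowerSeries (Fin 2) R) (i : ℕ) :
    expCoeff₂ P i 0 = i ! * PowerSeries.coeff i (restrictTo 0 P) := by
  simp [expCoeff₂, bidegree, coeff_restrictTo]

theorem expCoeff₂_zero_left (P : MvPowerSeries (Fin 2) R) (j : ℕ) :
    expCoeff₂ P 0 j = j ! * PowerSeries.coeff j (restrictTo 1 P) := by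
  simp [expCoeff₂, bidegree, coeff_restrictTo]

theorem expCoeff₂_smul (c : R) (P : MvPowerSeries (Fin 2) R) (i j : ℕ) :
    expCoeff₂ (c • P) i j = c * expCoeff₂ P i j := by
  rw [expCoeff₂, expCoeff₂, map_smul, smul_eq_mul, mul_left_comm]

end TwoVariables

section DerivXSubY

variable {R : Type*} [CommRing R]

variable (R) in
noncomputable def derivXSubY : Derivation R (MvPowerSeries (Fin 2) R) (MvPowerSeries (Fin 2) R) :=
  pderiv R 0 - pderiv R 1

theorem expCoeff₂_derivXSubY (P : MvPowerSeries (Fin 2) R) (i j : ℕ) :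
    expCoeff₂ (derivXSubY R P) i j = expCoeff₂ P (i + 1) j - expCoeff₂ P i (j + 1) := by
  rw [← expCoeff₂_pderiv_zero, ← expCoeff₂_pderiv_one, derivXSubY, Derivation.sub_apply]
  simp only [expCoeff₂, map_sub, mul_sub]

theorem expCoeff₂_second_diff {P : MvPowerSeries (Fin 2) R} {c : R}
    (hP : derivXSubY R (derivXSubY R P) = c • P) (i j : ℕ) :
    expCoeff₂ P (i + 2) j - 2 * expCoeff₂ P (i + 1) (j + 1) + expCoeff₂ P i (j + 2) =
      c * expCoeff₂ P i j := by
  have h := congrArg (expCoeff₂ · i j) hP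
  simp only [expCoeff₂_derivXSubY, expCoeff₂_smul, add_assoc, one_add_one_eq_two] at h
  linear_combination h

end DerivXSubY

section Uniqueness

variable {K : Type*} [CommRing K]

theorem eq_mul_of_second_diff_eq_zero {e : ℕ → K} {s : ℕ} (h0 : e 0 = 0)
    (h : ∀ k, k + 2 ≤ s → e (k + 2) - 2 * e (k + 1) + e k = 0) :
    ∀ k ≤ s, e k = k * e 1 := by
  intro k
  induction k using Nat.strong_induction_on with
  | _ k ih =>
    intro hk
    match k with
    | 0 => simp [h0]
    | 1 => simp
    | k + 2 =>
      have hk2 := h k hk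
      rw [ih (k + 1) (by omega) (by omega), ih k (by omega) (by omega)] at hk2
      push_cast at hk2 ⊢
      linear_combination hk2

variable [NoZeroDivisors K] [CharZero K]

theorem eq_zero_of_second_diff_of_boundary {w : ℕ → ℕ → K} (c : K)
    (hw : ∀ i j, w (i + 2) j - 2 * w (i + 1) (j + 1) + w i (j + 2) = c * w i j)
    (hrow : ∀ m, w m 0 = 0) (hcol : ∀ m, w 0 m = 0) : w = 0 := by
  suffices h : ∀ s i j, i + j = s → w i j = 0 by
    ext i j
    exact h _ i j rfl
  intro s
  induction s using Nat.strong_induction_on with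
  | _ s ih =>
    intro i j hij
    rcases Nat.eq_zero_or_pos s with rfl | hs
    · obtain ⟨rfl, rfl⟩ : i = 0 ∧ j = 0 := by omega
      exact hrow 0
    have hlin := eq_mul_of_second_diff_eq_zero (e := fun k => w k (s - k)) (s := s) (hcol s)
      fun k hk => by
        obtain ⟨t, rfl⟩ : ∃ t, s = k + 2 + t := ⟨s - (k + 2), by omega⟩
        have hk := hw k t
        rw [ih (k + t) (by omega) k t rfl, mul_zero] at hk
        rw [show k + 2 + t - (k + 2) = t by omega, show k + 2 + t - (k + 1) = t + 1 by omega,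
          show k + 2 + t - k = t + 2 by omega]
        exact hk
    have h1 : w 1 (s - 1) = 0 := by
      have hs' := hlin s le_rfl
      simp only [Nat.sub_self, hrow] at hs'
      exact (mul_eq_zero.mp hs'.symm).resolve_left (Nat.cast_ne_zero.mpr hs.ne')
    have hi := hlin i (by omega)
    simp only [h1, mul_zero, show s - i = j by omega] at hi
    exact hi

theorem eq_of_second_diff_of_boundary {u v : ℕ → ℕ → K} (c : K)
    (hu : ∀ i j, u (i + 2) j - 2 * u (i + 1) (j + 1) + u i (j + 2) = c * u i j)
    (hv : ∀ i j, v (i + 2) j - 2 * v (i + 1) (j + 1) + v i (j + 2) = c * v i j)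
    (hrow : ∀ m, u m 0 = v m 0) (hcol : ∀ m, u 0 m = v 0 m) : u = v :=
  sub_eq_zero.mp <| eq_zero_of_second_diff_of_boundary c
    (fun i j => by simp only [Pi.sub_apply]; linear_combination hu i j - hv i j)
    (fun m => sub_eq_zero.mpr (hrow m)) (fun m => sub_eq_zero.mpr (hcol m))

end Uniqueness

theorem coeff_substXY (g : ℝ⟦X⟧) (ε : ℝ) (d : Fin 2 →₀ ℕ) :
    coeff d (substXY g ε) =
      PowerSeries.coeff (d 0 + d 1) g * (Nat.choose (d 0 + d 1) (d 0)) * ε ^ (d 1) :=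
  rfl

theorem substXY_neg (g : ℝ⟦X⟧) (ε : ℝ) : substXY (-g) ε = -substXY g ε := by
  ext d
  simp [coeff_substXY]

theorem pderiv_zero_substXY (g : ℝ⟦X⟧) (ε : ℝ) :
    pderiv ℝ 0 (substXY g ε) = substXY (d⁄dX ℝ g) ε := by
  ext d
  have hc : ((d 0 + d 1 + 1).choose (d 0 + 1) : ℝ) * (d 0 + 1) =
      (d 0 + d 1 + 1) * (d 0 + d 1).choose (d 0) := by
    exact_mod_cast (Nat.add_one_mul_choose_eq (d 0 + d 1) (d 0)).symm
  simp only [coeff_pderiv, coeff_substXY, PowerSeries.coeff_derivative, Finsupp.coe_add,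
    Pi.add_apply, Finsupp.single_eq_same, Finsupp.single_eq_of_ne one_ne_zero, add_zero,
    add_right_comm _ 1, Nat.cast_add]
  linear_combination (PowerSeries.coeff (d 0 + d 1 + 1) g * ε ^ d 1) * hc

theorem pderiv_one_substXY (g : ℝ⟦X⟧) (ε : ℝ) :
    pderiv ℝ 1 (substXY g ε) = ε • substXY (d⁄dX ℝ g) ε := by
  ext d
  have hc : ((d 0 + d 1 + 1).choose (d 0) : ℝ) * (d 1 + 1) =
      (d 0 + d 1).choose (d 0) * (d 0 + d 1 + 1) := by
    have h := Nat.choose_mul_succ_eq (d 0 + d 1) (d 0)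
    rw [show d 0 + d 1 + 1 - d 0 = d 1 + 1 by omega] at h
    exact_mod_cast h.symm
  simp only [coeff_pderiv, coeff_substXY, PowerSeries.coeff_derivative, Finsupp.coe_add,
    Pi.add_apply, Finsupp.single_eq_same, Finsupp.single_eq_of_ne zero_ne_one, add_zero,
    ← add_assoc, map_smul, smul_eq_mul, Nat.cast_add]
  linear_combination (PowerSeries.coeff (d 0 + d 1 + 1) g * ε ^ (d 1 + 1)) * hc

theorem derivXSubY_substXY (g : ℝ⟦X⟧) (ε : ℝ) :
    derivXSubY ℝ (substXY g ε) = (1 - ε) • substXY (d⁄dX ℝ g) ε := by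
  rw [derivXSubY, Derivation.sub_apply, pderiv_zero_substXY, pderiv_one_substXY, sub_smul,
    one_smul]

theorem restrictTo_zero_substXY (g : ℝ⟦X⟧) (ε : ℝ) : restrictTo 0 (substXY g ε) = g := by
  ext m
  simp [coeff_restrictTo, coeff_substXY]

theorem restrictTo_one_substXY (g : ℝ⟦X⟧) (ε : ℝ) :
    restrictTo 1 (substXY g ε) = PowerSeries.rescale ε g := by
  ext m
  simp [coeff_restrictTo, coeff_substXY, mul_comm]

theorem coeff_cosPS (m : ℕ) :
    PowerSeries.coeff m cosPS = if Even m then (-1 : ℝ) ^ (m / 2) / m ! else 0 :=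
  PowerSeries.coeff_mk _ _

theorem constantCoeff_cosPS : PowerSeries.constantCoeff cosPS = 1 := by
  simp [← PowerSeries.coeff_zero_eq_constantCoeff_apply, coeff_cosPS]

theorem derivative_derivative_cosPS : d⁄dX ℝ (d⁄dX ℝ cosPS) = -cosPS := by
  ext m
  have he : Even (m + 1 + 1) ↔ Even m := by simp [add_assoc, Nat.even_add]
  have hd : (m + 1 + 1) / 2 = m / 2 + 1 := by omega
  simp only [PowerSeries.coeff_derivative, coeff_cosPS, map_neg, he, hd]
  split_ifs
  · rw [Nat.factorial_succ, Nat.factorial_succ]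
    push_cast
    field_simp
    ring
  · simp

theorem rescale_neg_one_cosPS : PowerSeries.rescale (-1) cosPS = cosPS := by
  ext m
  rw [PowerSeries.coeff_rescale, coeff_cosPS]
  split_ifs with hm
  · rw [hm.neg_one_pow, one_mul]
  · rw [mul_zero]

theorem mul_inv_cosPS_mul_cosPS (g : ℝ⟦X⟧) : g * cosPS⁻¹ * cosPS = g := by
  rw [mul_assoc, PowerSeries.inv_mul_cancel _ (by simp [constantCoeff_cosPS]), mul_one]

theorem derivXSubY_sq_mul_substXY_cosPS (g h : ℝ⟦X⟧) :
    derivXSubY ℝ (derivXSubY ℝ (substXY g 1 * substXY h 1 * substXY cosPS (-1))) =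
      (-4 : ℝ) • (substXY g 1 * substXY h 1 * substXY cosPS (-1)) := by
  have hgh : derivXSubY ℝ (substXY g 1 * substXY h 1) = 0 := by
    simp [Derivation.leibniz, derivXSubY_substXY]
  rw [Derivation.map_mul_of_map_eq_zero _ hgh, Derivation.map_mul_of_map_eq_zero _ hgh,
    derivXSubY_substXY, Derivation.map_smul, derivXSubY_substXY, derivative_derivative_cosPS,
    substXY_neg, smul_smul, mul_smul_comm]
  norm_num

theorem eq_factorial_mul_coeff_evenPS {f a : ℕ → ℝ} (h0 : a 0 = 1)
    (hodd : ∀ n, a (2 * n + 1) = 0) (heven : ∀ n, 1 ≤ n → a (2 * n) = f n) (m : ℕ) :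
    a m = m ! * PowerSeries.coeff m (evenPS f) := by
  rcases Nat.even_or_odd' m with ⟨n, rfl | rfl⟩
  · rcases Nat.eq_zero_or_pos n with rfl | hn
    · simp [h0, evenPS]
    · rw [evenPS, PowerSeries.coeff_mk, if_neg (by omega), if_pos (by omega),
        Nat.mul_div_cancel_left n two_pos, heven n hn]
      field_simp
  · rw [evenPS, PowerSeries.coeff_mk, if_neg (by omega), if_neg (by omega), hodd, mul_zero]

theorem stmt18_general (f : ℕ → ℝ) (γ : ℕ → ℕ → ℝ)
    (hrec : ∀ i j, 1 ≤ i → 1 ≤ j →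
      γ i j = 2 * γ (i - 1) (j - 1) + (1 / 2) * (γ (i - 1) (j + 1) + γ (i + 1) (j - 1)))
    (h00 : γ 0 0 = 1)
    (hzero : ∀ n : ℕ, γ (2 * n + 1) 0 = 0 ∧ γ 0 (2 * n + 1) = 0)
    (hval : ∀ n, 1 ≤ n → γ (2 * n) 0 = f n ∧ γ 0 (2 * n) = f n) :
    ∀ d : Fin 2 →₀ ℕ,
      γ (d 0) (d 1) / (Nat.factorial (d 0) * Nat.factorial (d 1)) =
        MvPowerSeries.coeff d
          (substXY (evenPS f) 1 * substXY cosPS⁻¹ 1 * substXY cosPS (-1)) := by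
  set P := substXY (evenPS f) 1 * substXY cosPS⁻¹ 1 * substXY cosPS (-1)
  have hrow : restrictTo 0 P = evenPS f := by
    simp only [P, restrictTo_mul, restrictTo_zero_substXY, mul_inv_cosPS_mul_cosPS]
  have hcol : restrictTo 1 P = evenPS f := by
    simp only [P, restrictTo_mul, restrictTo_one_substXY, PowerSeries.rescale_one,
      RingHom.id_apply, rescale_neg_one_cosPS, mul_inv_cosPS_mul_cosPS]
  have hγ : γ = expCoeff₂ P := by
    refine eq_of_second_diff_of_boundary (-4) (fun i j => ?_)
      (expCoeff₂_second_diff (derivXSubY_sq_mul_substXY_cosPS _ _)) (fun m => ?_) (fun m => ?_)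
    · have h := hrec (i + 1) (j + 1) (by omega) (by omega)
      simp only [Nat.add_sub_cancel, add_assoc, one_add_one_eq_two] at h
      linear_combination -2 * h
    · rw [expCoeff₂_zero_right, hrow]
      exact eq_factorial_mul_coeff_evenPS (a := (γ · 0)) h00 (fun n => (hzero n).1)
        (fun n hn => (hval n hn).1) m
    · rw [expCoeff₂_zero_left, hcol]
      exact eq_factorial_mul_coeff_evenPS (a := γ 0) h00 (fun n => (hzero n).2)
        (fun n hn => (hval n hn).2) m
  intro d
  rw [hγ, expCoeff₂, bidegree_apply_zero_apply_one, mul_div_cancel_left₀ _ (by positivity)]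

/-- Proposition 4.1: under the stated conditions on the matrix `Γ`,
`Σ_{i,j} γ_{i,j} x^i y^j/(i! j!) = f(x+y)·sec(x+y)·cos(x−y)` as formal power series,
where `sec = cosPS⁻¹` is the formal inverse of the cosine series. -/
theorem stmt18 (f : ℕ → ℝ) (γ : ℕ → ℕ → ℝ)
    (hconv : ∃ r : ℝ, 0 < r ∧
      Summable (fun n : ℕ => |f n| * r ^ (2 * n) / Nat.factorial (2 * n)))
    (hrec : ∀ i j, 1 ≤ i → 1 ≤ j →
      γ i j = 2 * γ (i - 1) (j - 1) + (1 / 2) * (γ (i - 1) (j + 1) + γ (i + 1) (j - 1)))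
    (hodd : ∀ i j, Odd (i + j) → γ i j = 0)
    (h00 : γ 0 0 = 1)
    (hzero : ∀ n : ℕ, γ (2 * n + 1) 0 = 0 ∧ γ 0 (2 * n + 1) = 0)
    (hval : ∀ n, 1 ≤ n → γ (2 * n) 0 = f n ∧ γ 0 (2 * n) = f n) :
    ∀ d : Fin 2 →₀ ℕ,
      γ (d 0) (d 1) / (Nat.factorial (d 0) * Nat.factorial (d 1)) =
        MvPowerSeries.coeff d
          (substXY (evenPS f) 1 * substXY cosPS⁻¹ 1 * substXY cosPS (-1)) :=
  stmt18_general f γ hrec h00 hzero hval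
end
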